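/- arXiv:1403.5822 — 7 statements merged into one kernel-verified Lean document; each statement's English description precedes it below -/
import Mathlib

section
/- Define, for a real parameter p > 0 and integers 0 ≤ i,j ≤ n, u_{ij} = Σ_{k=i}^{n} Σ_{l=n-j}^{k} s(k,l)·(-1)^{n-j-l} / (k!·p^l) · binom(l, n-j) · binom(n-i, n-k), and v_{ij} = Σ_{r=0}^{j} (-1)^r · binom(n+1, r) · (p(j-r)+1)^{n-i}. Then for all 0 ≤ i,j ≤ n, Σ_{m=0}^{n} u_{im} · v_{mj} = δ_{ij}, i.e., the matrices U = (u_{ij}) and V = (v_{ij}) satisfy UV = Id. -/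
/-- The signed Stirling number of the first kind. -/
noncomputable def stirlingFirst (n k : ℕ) : ℤ := (descPochhammer ℤ n).coeff k

/-- `u^{(p)}_{ij}(n) = Σ_{k=i}^{n} Σ_{l=n-j}^{k}
  s(k,l)·(-1)^{n-j-l}/(k!·p^l) · binom(l,n-j) · binom(n-i,n-k)`. -/
noncomputable def uMat (p : ℝ) (n i j : ℕ) : ℝ :=
  ∑ k ∈ Finset.Icc i n, ∑ l ∈ Finset.Icc (n - j) k,
    (stirlingFirst k l : ℝ) * (-1 : ℝ) ^ ((n : ℤ) - j - l) / ((Nat.factorial k : ℝ) * p ^ l)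
      * (l.choose (n - j)) * ((n - i).choose (n - k))

/-- `v^{(p)}_{ij}(n) = Σ_{r=0}^{j} (-1)^r·binom(n+1,r)·(p(j-r)+1)^{n-i}`. -/
noncomputable def vMat (p : ℝ) (n i j : ℕ) : ℝ :=
  ∑ r ∈ Finset.range (j + 1),
    (-1 : ℝ) ^ r * ((n + 1).choose r : ℝ) * (p * ((j : ℝ) - r) + 1) ^ (n - i)

/-! For `p ≠ 0`, row `i` of `U` satisfies
`∑ₘ u_{im} (p y + 1)^{n-m} = ∑ₖ C(n-i, n-k) · C(y, k)`: the sum over `m` is the binomial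
expansion of `(p y)^l`, and `∑ₗ s(k,l) yˡ = k! · C(y, k)`. As `v_{mj}` is an alternating
combination of the values `(p (j-r) + 1)^{n-m}`, this gives
`(UV)_{ij} = ∑ᵣ (-1)^r C(n+1, r) ∑ₖ C(n-i, n-k) C(j-r, k)`. Vandermonde turns the inner sum
into `C(n-i+j-r, n)`, and the alternating sum over `r` is the coefficient of `X^{n-i+j}` in
`(1-X)^{n+1} · X^n / (1-X)^{n+1} = X^n`. -/

open Finset

namespace PowerSeries

theorem coeff_one_sub_X_pow {R : Type*} [CommRing R] (m a : ℕ) :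
    coeff a ((1 - X : R⟦X⟧) ^ m) = (-1) ^ a * m.choose a := by
  have h : (1 - X : R⟦X⟧) = rescale (-1) (1 + X) := by simp [rescale_X, sub_eq_add_neg]
  rw [h, ← map_pow, coeff_rescale, ← binomialSeries_nat (R := ℤ), binomialSeries_coeff,
    Ring.choose_natCast]
  simp

theorem one_sub_X_pow_succ_mul_mk_choose {R : Type*} [CommRing R] (d : ℕ) :
    (1 - X : R⟦X⟧) ^ (d + 1) * mk (fun s => (s.choose d : R)) = X ^ d := by
  have h : mk (fun s => (s.choose d : R)) = X ^ d * mk (fun s => ((d + s).choose d : R)) := by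
    ext s
    rw [coeff_X_pow_mul', coeff_mk]
    split_ifs with hs
    · simp [Nat.add_sub_cancel' hs]
    · simp [Nat.choose_eq_zero_of_lt (not_le.mp hs)]
  rw [h, mul_left_comm, mul_comm _ (mk _), mk_add_choose_mul_one_sub_pow_eq_one, mul_one]

end PowerSeries

open PowerSeries in
theorem sum_range_neg_one_pow_mul_choose_mul_choose_sub (d N : ℕ) :
    ∑ r ∈ range (N + 1), (-1 : ℤ) ^ r * (d + 1).choose r * (N - r).choose d =
      if N = d then 1 else 0 := by
  have h := congrArg (coeff N) (one_sub_X_pow_succ_mul_mk_choose (R := ℤ) d)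
  rw [coeff_mul, Nat.sum_antidiagonal_eq_sum_range_succ
    (fun a b => coeff a ((1 - X : ℤ⟦X⟧) ^ (d + 1)) * coeff b (mk fun s => (s.choose d : ℤ))),
    coeff_X_pow] at h
  simpa [coeff_one_sub_X_pow] using h

theorem Nat.sum_Icc_choose_mul_choose {n i : ℕ} (hi : i ≤ n) (b : ℕ) :
    ∑ k ∈ Icc i n, (n - i).choose (n - k) * b.choose k = (n - i + b).choose n := by
  rw [Nat.add_choose_eq, ← Nat.sum_antidiagonal_swap]
  simp only [Prod.fst_swap, Prod.snd_swap]
  rw [Nat.sum_antidiagonal_eq_sum_range_succ (fun x y => (n - i).choose y * b.choose x)]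
  refine sum_subset (fun k hk => ?_) (fun k hk hk' => ?_)
  · simp only [mem_Icc, mem_range] at hk ⊢; omega
  · simp only [mem_Icc, mem_range, not_and_or] at hk hk'
    rw [Nat.choose_eq_zero_of_lt (by omega), zero_mul]

theorem sum_neg_one_pow_mul_choose_mul_sum_choose_mul_choose {n i j : ℕ} (hi : i ≤ n)
    (hj : j ≤ n) :
    ∑ r ∈ range (j + 1), (-1 : ℤ) ^ r * (n + 1).choose r *
      ∑ k ∈ Icc i n, ((n - i).choose (n - k) * (j - r).choose k : ℕ) =
      if i = j then 1 else 0 := by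
  calc _ = ∑ r ∈ range (n - i + j + 1),
        (-1 : ℤ) ^ r * (n + 1).choose r * (n - i + j - r).choose n := by
        refine sum_congr rfl (fun r hr => ?_) |>.trans
          (sum_subset (fun r hr => ?_) fun r hr₁ hr₂ => ?_)
        · rw [Nat.sum_Icc_choose_mul_choose hi, Nat.add_sub_assoc (by simp at hr; omega : r ≤ j)]
        · simp only [mem_range] at hr ⊢; omega
        · simp only [mem_range, not_lt] at hr₁ hr₂
          rw [Nat.choose_eq_zero_of_lt (by omega : n - i + j - r < n), Nat.cast_zero, mul_zero]
    _ = if n - i + j = n then 1 else 0 := sum_range_neg_one_pow_mul_choose_mul_choose_sub n _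
    _ = if i = j then 1 else 0 := by congr 1; apply propext; omega

theorem neg_one_zpow_natCast_sub_natCast {R : Type*} [DivisionRing R] (a b : ℕ) :
    (-1 : R) ^ ((a : ℤ) - b) = (-1) ^ (a + b) := by
  rw [neg_one_zpow_eq_ite, neg_one_pow_eq_ite]
  simp [Int.even_sub, Nat.even_add]

theorem sum_range_neg_one_zpow_mul_choose_mul_pow {R : Type*} [Field R] {n l : ℕ} (hl : l ≤ n)
    (x : R) :
    ∑ m ∈ range (n + 1), (-1 : R) ^ ((n : ℤ) - m - l) * l.choose (n - m) * x ^ (n - m) =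
      (x - 1) ^ l := by
  rw [← sum_range_reflect, sub_pow]
  symm
  refine sum_subset (range_subset_range.2 (by omega)) (fun t ht ht' => ?_) |>.trans
    (sum_congr rfl fun t ht => ?_)
  · simp only [mem_range] at ht ht'
    rw [Nat.choose_eq_zero_of_lt (by omega), Nat.cast_zero, mul_zero]
  · simp only [mem_range] at ht
    rw [Nat.add_sub_cancel, Nat.sub_sub_self (by omega),
      show (n : ℤ) - (n - t : ℕ) - l = t - l by omega, neg_one_zpow_natCast_sub_natCast,
      one_pow, mul_one, mul_right_comm]

open Polynomial in
theorem sum_stirlingFirst_mul_pow {R : Type*} [CommRing R] [BinomialRing R] (k : ℕ) (y : R) :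
    ∑ l ∈ range (k + 1), (stirlingFirst k l : R) * y ^ l = k.factorial * Ring.choose y k := by
  rw [← nsmul_eq_mul, ← Ring.descPochhammer_eq_factorial_smul_choose, ← aeval_eq_smeval,
    aeval_eq_sum_range, descPochhammer_natDegree]
  simp [stirlingFirst, zsmul_eq_mul]

theorem uMat_eq_sum_range (p : ℝ) (n i m : ℕ) :
    uMat p n i m = ∑ k ∈ Icc i n, ∑ l ∈ range (k + 1),
      (n - i).choose (n - k) / (k.factorial : ℝ) * (stirlingFirst k l / p ^ l) *
        ((-1 : ℝ) ^ ((n : ℤ) - m - l) * l.choose (n - m)) := by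
  refine sum_congr rfl fun k _ => sum_subset (fun l hl => ?_) (fun l hl₁ hl₂ => ?_) |>.trans
    (sum_congr rfl fun l _ => by ring)
  · simp only [mem_Icc, mem_range] at hl ⊢; omega
  · simp only [mem_range, mem_Icc, not_and_or, not_le] at hl₁ hl₂
    rw [Nat.choose_eq_zero_of_lt (by omega : l < n - m)]
    simp

theorem sum_uMat_mul_mul_add_one_pow {p : ℝ} (hp : p ≠ 0) (n i : ℕ) (y : ℝ) :
    ∑ m ∈ range (n + 1), uMat p n i m * (p * y + 1) ^ (n - m) =
      ∑ k ∈ Icc i n, ((n - i).choose (n - k) : ℝ) * Ring.choose y k := by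
  simp only [uMat_eq_sum_range, sum_mul]
  rw [sum_comm]
  refine sum_congr rfl fun k hk => ?_
  rw [sum_comm]
  simp only [mem_Icc] at hk
  have hsum_m : ∀ l ∈ range (k + 1), ∑ m ∈ range (n + 1),
      (n - i).choose (n - k) / (k.factorial : ℝ) * (stirlingFirst k l / p ^ l) *
        ((-1 : ℝ) ^ ((n : ℤ) - m - l) * l.choose (n - m)) * (p * y + 1) ^ (n - m) =
      (n - i).choose (n - k) / (k.factorial : ℝ) * (stirlingFirst k l * y ^ l) := by
    intro l hl
    simp only [mem_range] at hl
    calc _ = (n - i).choose (n - k) / (k.factorial : ℝ) * (stirlingFirst k l / p ^ l) *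
          ∑ m ∈ range (n + 1), (-1 : ℝ) ^ ((n : ℤ) - m - l) * l.choose (n - m) *
            (p * y + 1) ^ (n - m) := by
          rw [mul_sum]; exact sum_congr rfl fun m _ => by ring
      _ = _ := by
          rw [sum_range_neg_one_zpow_mul_choose_mul_pow (by omega), add_sub_cancel_right, mul_pow]
          field_simp
  rw [sum_congr rfl hsum_m, ← mul_sum, sum_stirlingFirst_mul_pow]
  field_simp

/-- the matrices `U = (u_{ij})` and `V = (v_{ij})` satisfy `UV = Id`:
`Σ_{m=0}^{n} u_{im}·v_{mj} = δ_{ij}` for all `0 ≤ i, j ≤ n`. -/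
theorem uMat_mul_vMat_eq_delta (p : ℝ) (hp : 0 < p) (n i j : ℕ) (hi : i ≤ n) (hj : j ≤ n) :
    ∑ m ∈ Finset.range (n + 1), uMat p n i m * vMat p n m j =
      if i = j then 1 else 0 := by
  have hrow : ∀ r ∈ range (j + 1),
      ∑ m ∈ range (n + 1), uMat p n i m * (p * ((j : ℝ) - r) + 1) ^ (n - m) =
        ∑ k ∈ Icc i n, ((n - i).choose (n - k) * (j - r).choose k : ℕ) := by
    intro r hr
    rw [← Nat.cast_sub (by simp at hr; omega), sum_uMat_mul_mul_add_one_pow hp.ne']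
    push_cast [Ring.choose_natCast]
    rfl
  calc _ = ∑ r ∈ range (j + 1), (-1 : ℝ) ^ r * (n + 1).choose r *
        ∑ m ∈ range (n + 1), uMat p n i m * (p * ((j : ℝ) - r) + 1) ^ (n - m) := by
        simp only [vMat, mul_sum]
        rw [sum_comm]
        exact sum_congr rfl fun r _ => sum_congr rfl fun m _ => by ring
    _ = ((∑ r ∈ range (j + 1), (-1 : ℤ) ^ r * (n + 1).choose r *
        ∑ k ∈ Icc i n, ((n - i).choose (n - k) * (j - r).choose k : ℕ) : ℤ) : ℝ) := by
        rw [sum_congr rfl fun r hr => by rw [hrow r hr]]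
        push_cast
        rfl
    _ = _ := by
        rw [sum_neg_one_pow_mul_choose_mul_sum_choose_mul_choose hi hj]
        split_ifs <;> simp
end

section
/- Let p be a positive real number and define v_{i,j}(n) = Σ_{r=0}^{j} (-1)^r · binom(n+1, r) · (p(j-r)+1)^{n-i} for 0 ≤ i,j ≤ n. Then the recursion v_{i,j}(n) = (pj+1)·v_{i,j}(n-1) + (p(n+1-j)-1)·v_{i,j-1}(n-1) holds for 1 ≤ j ≤ n-1 and 0 ≤ i ≤ n-1. -/
/-! Write `y_r = p(j - r) + 1`. After splitting off the `r = 0` term of `v_{i,j}(n)` and of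
`v_{i,j}(n-1)` and shifting the index of `v_{i,j-1}(n-1)`, both sides are sums of the powers
`y_r^{n-1-i}`, and comparing coefficients leaves
`C(n+1,r) y_r = (pj+1) C(n,r) - (p(n+1-j)-1) C(n,r-1)`,
which is Pascal's rule together with `r C(n,r) = (n+1-r) C(n,r-1)`. -/

theorem cast_choose_succ_mul {R : Type*} [CommRing R] (n r : ℕ) :
    (n.choose (r + 1) : R) * (r + 1) = n.choose r * (n - r) := by
  rcases le_or_gt r n with hrn | hnr
  · rw [← Nat.cast_sub hrn]
    exact_mod_cast congrArg (Nat.cast : ℕ → R) (Nat.choose_succ_right_eq n r)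
  · simp [Nat.choose_eq_zero_of_lt hnr, Nat.choose_eq_zero_of_lt (Nat.lt_succ_of_lt hnr)]

theorem cast_choose_succ_succ_mul_eq {R : Type*} [CommRing R] (n r : ℕ) (p x : R) :
    ((n + 1).choose (r + 1) : R) * (p * (x - (r + 1)) + 1)
      = (p * x + 1) * n.choose (r + 1) - (p * (n + 1 - x) - 1) * n.choose r := by
  rw [Nat.choose_succ_succ]
  push_cast
  linear_combination (-p) * cast_choose_succ_mul (R := R) n r

theorem vMat_succ_succ (p : ℝ) (m i t : ℕ) (hi : i ≤ m) :
    vMat p (m + 1) i (t + 1)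
      = (p * (t + 1) + 1) * vMat p m i (t + 1) + (p * (m + 1 - t) - 1) * vMat p m i t := by
  unfold vMat
  rw [Nat.sub_add_comm hi, Finset.sum_range_succ', Finset.sum_range_succ' _ (t + 1), mul_add,
    Finset.mul_sum, Finset.mul_sum]
  simp only [Nat.cast_add, Nat.cast_one, Nat.cast_zero, pow_zero, Nat.choose_zero_right, one_mul,
    sub_zero, add_sub_add_right_eq_sub]
  have hterm : ∀ r ∈ Finset.range (t + 1),
      (-1) ^ (r + 1) * ((m + 1 + 1).choose (r + 1) : ℝ) * (p * (t - r) + 1) ^ (m - i + 1)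
        = (p * (t + 1) + 1)
            * ((-1) ^ (r + 1) * ((m + 1).choose (r + 1) : ℝ) * (p * (t - r) + 1) ^ (m - i))
          + (p * (m + 1 - t) - 1)
            * ((-1) ^ r * ((m + 1).choose r : ℝ) * (p * (t - r) + 1) ^ (m - i)) := by
    intro r _
    have h := cast_choose_succ_succ_mul_eq (R := ℝ) (m + 1) r p (t + 1)
    push_cast at h
    linear_combination (-1) ^ (r + 1) * (p * (t - r) + 1) ^ (m - i) * h
  rw [Finset.sum_congr rfl hterm, Finset.sum_add_distrib]
  ring

theorem vMat_recursion_general (p : ℝ) (n i j : ℕ)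
    (hn : 1 ≤ n) (hj1 : 1 ≤ j) (hi : i ≤ n - 1) :
    vMat p n i j =
      (p * j + 1) * vMat p (n - 1) i j
        + (p * ((n : ℝ) + 1 - j) - 1) * vMat p (n - 1) i (j - 1) := by
  obtain ⟨m, rfl⟩ := Nat.exists_eq_add_of_le' hn
  obtain ⟨t, rfl⟩ := Nat.exists_eq_add_of_le' hj1
  rw [Nat.add_sub_cancel] at hi ⊢
  rw [vMat_succ_succ p m i t hi]
  push_cast
  ring

/-- the recursion
`v_{i,j}(n) = (pj+1)·v_{i,j}(n-1) + (p(n+1-j)-1)·v_{i,j-1}(n-1)`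
for `1 ≤ j ≤ n-1` and `0 ≤ i ≤ n-1`. -/
theorem vMat_recursion (p : ℝ) (hp : 0 < p) (n i j : ℕ)
    (hn : 1 ≤ n) (hj1 : 1 ≤ j) (hj2 : j ≤ n - 1) (hi : i ≤ n - 1) :
    vMat p n i j =
      (p * j + 1) * vMat p (n - 1) i j
        + (p * ((n : ℝ) + 1 - j) - 1) * vMat p (n - 1) i (j - 1) :=
  vMat_recursion_general p n i j hn hj1 hi
end

section
/- Let p, p* be real numbers with 1/p + 1/p* = 1 and p,p* ≠ 0, and define v^{(p)}_{i,j}(n) = Σ_{r=0}^{j} (-1)^r · binom(n+1,r) · (p(j-r)+1)^{n-i}. Then the duality v^{(p*)}_{i,j}(n) = (-1)^i · (p*/p)^{n-i} · v^{(p)}_{i,n-j}(n) holds for 0 ≤ i,j ≤ n. -/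
/-!
Put `f(x) = (p (x - j - 1) + 1)^(n-i)`, a polynomial of degree `< n + 1`. From `1/p + 1/p* = 1`
one gets `p* (j - r) + 1 = -(p*/p) (p (r - j - 1) + 1)`, so `v^{(p*)}_{i,j}(n)` is `(-p*/p)^(n-i)`
times the partial alternating sum `Σ_{r ≤ j} (-1)^r binom(n+1,r) f(r)`. The full sum over
`r ≤ n + 1` is the `(n+1)`-st forward difference of `f` at `0`, hence vanishes; so the partial sum
is minus the complementary one, which becomes `± v^{(p)}_{i,n-j}(n)` under `r ↦ n + 1 - r`.
-/

open Finset Polynomial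

theorem neg_one_pow_sub {R : Type*} [Monoid R] [HasDistribNeg R] {m k : ℕ} (h : k ≤ m) :
    (-1 : R) ^ (m - k) = (-1) ^ m * (-1) ^ k := by
  obtain ⟨d, rfl⟩ := Nat.exists_eq_add_of_le h
  rw [Nat.add_sub_cancel_left, ← pow_add, show k + d + k = d + 2 * k by omega, pow_add, pow_mul,
    neg_one_sq, one_pow, mul_one]

namespace Polynomial

variable {R : Type*} [CommRing R]

theorem sum_range_neg_one_pow_mul_choose_mul_eval_eq_zero {P : R[X]} {m : ℕ}
    (hP : P.natDegree < m) :
    ∑ k ∈ range (m + 1), (-1) ^ k * m.choose k * P.eval (k : R) = 0 := by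
  have h := congr_fun (fwdDiff_iter_eq_zero_of_degree_lt hP) 0
  rw [fwdDiff_iter_eq_sum_shift, Pi.zero_apply] at h
  rw [← mul_zero ((-1 : R) ^ m), ← h, mul_sum]
  refine sum_congr rfl fun k hk ↦ ?_
  rw [zero_add, nsmul_one, zsmul_eq_mul, Int.cast_mul, Int.cast_pow, Int.cast_neg, Int.cast_one,
    Int.cast_natCast]
  have hkm : k ≤ m := Nat.le_of_lt_succ (mem_range.1 hk)
  rw [show (-1 : R) ^ k = (-1) ^ m * (-1) ^ (m - k) by
    rw [← neg_one_pow_sub (Nat.sub_le m k), Nat.sub_sub_self hkm]]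
  ring

theorem sum_range_neg_one_pow_mul_choose_mul_eval_reflect {P : R[X]} {m j : ℕ}
    (hP : P.natDegree < m) (hj : j < m) :
    ∑ r ∈ range (j + 1), (-1) ^ r * m.choose r * P.eval (r : R) =
      (-1) ^ (m + 1) * ∑ s ∈ range (m - j), (-1) ^ s * m.choose s * P.eval ((m : R) - s) := by
  set f : ℕ → R := fun r ↦ (-1) ^ r * m.choose r * P.eval (r : R)
  have htail : ∑ s ∈ range (m - j), f (j + 1 + s) =
      (-1) ^ m * ∑ s ∈ range (m - j), (-1) ^ s * m.choose s * P.eval ((m : R) - s) := by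
    rw [← sum_range_reflect, mul_sum]
    refine sum_congr rfl fun s hs ↦ ?_
    have hs : s < m - j := mem_range.1 hs
    have hsm : s ≤ m := by omega
    rw [show j + 1 + (m - j - 1 - s) = m - s by omega]
    simp only [f]
    rw [neg_one_pow_sub hsm, Nat.choose_symm hsm, Nat.cast_sub hsm]
    ring
  have hsplit := sum_range_add f (j + 1) (m - j)
  rw [show j + 1 + (m - j) = m + 1 by omega, sum_range_neg_one_pow_mul_choose_mul_eval_eq_zero hP,
    htail] at hsplit
  linear_combination -hsplit

end Polynomial

theorem mul_add_one_eq_of_one_div_add_one_div_eq_one {p ps : ℝ} (hp : p ≠ 0) (hps : ps ≠ 0)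
    (hconj : 1 / p + 1 / ps = 1) (t : ℝ) :
    ps * t + 1 = -(ps / p) * (p * (-t - 1) + 1) := by
  field_simp at hconj ⊢
  linear_combination hconj

/-- the duality
`v^{(p*)}_{i,j}(n) = (-1)^i·(p*/p)^{n-i}·v^{(p)}_{i,n-j}(n)` for `0 ≤ i, j ≤ n`,
where `1/p + 1/p* = 1`. -/
theorem vMat_duality (p ps : ℝ) (hp : p ≠ 0) (hps : ps ≠ 0)
    (hconj : 1 / p + 1 / ps = 1) (n i j : ℕ) (hi : i ≤ n) (hj : j ≤ n) :
    vMat ps n i j = (-1 : ℝ) ^ i * (ps / p) ^ (n - i) * vMat p n i (n - j) := by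
  set P : ℝ[X] := (C p * (X - C ((j : ℝ) + 1)) + 1) ^ (n - i)
  have hP : P.natDegree < n + 1 := by
    have hlin : (C p * (X - C ((j : ℝ) + 1)) + 1).natDegree ≤ 1 := by compute_degree
    exact (natDegree_pow_le_of_le _ hlin).trans_lt (by omega)
  have hL : vMat ps n i j = (-(ps / p)) ^ (n - i) *
      ∑ r ∈ range (j + 1), (-1) ^ r * ((n + 1).choose r : ℝ) * P.eval (r : ℝ) := by
    rw [vMat, mul_sum]
    refine sum_congr rfl fun r _ ↦ ?_
    rw [mul_add_one_eq_of_one_div_add_one_div_eq_one hp hps hconj, mul_pow]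
    simp only [P, eval_pow, eval_add, eval_mul, eval_C, eval_sub, eval_X, eval_one]
    ring
  have hR : vMat p n i (n - j) = ∑ s ∈ range (n + 1 - j),
      (-1) ^ s * ((n + 1).choose s : ℝ) * P.eval (((n + 1 : ℕ) : ℝ) - s) := by
    rw [vMat, show n + 1 - j = n - j + 1 by omega]
    refine sum_congr rfl fun s _ ↦ ?_
    simp only [P, eval_pow, eval_add, eval_mul, eval_C, eval_sub, eval_X, eval_one]
    push_cast [Nat.cast_sub hj]
    ring
  have hsign : (-1 : ℝ) ^ (n - i) * (-1) ^ (n + 1 + 1) = (-1) ^ i := by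
    rw [← pow_add, show n - i + (n + 1 + 1) = i + 2 * (n - i + 1) by omega, pow_add, pow_mul,
      neg_one_sq, one_pow, mul_one]
  rw [hL, sum_range_neg_one_pow_mul_choose_mul_eval_reflect hP (by omega), ← hR, neg_pow, ← hsign]
  ring
end

section
/- Let p be a positive real number and define w_j(n) = n!·p^n·u^{(p)}_{0,n-j}(n), where u^{(p)}_{ij}(n) = Σ_{k=i}^{n} Σ_{l=n-j}^{k} s(k,l)·(-1)^{n-j-l}/(k!·p^l) · binom(l,n-j) · binom(n-i,n-k). Then w_j(n) satisfies the recursion w_j(n) = (pn-1)·w_j(n-1) + w_{j-1}(n-1), with w_0(0) = 1. -/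
/-- `w_j(n) = n!·p^n·u^{(p)}_{0,n-j}(n)`, with the convention that `w_j(n) = 0`
for `j` outside `{0,...,n}` (the index `j` ranges over `ℤ`). -/
noncomputable def wSF (p : ℝ) (n : ℕ) (j : ℤ) : ℝ :=
  if 0 ≤ j ∧ j ≤ n then (Nat.factorial n : ℝ) * p ^ n * uMat p n 0 (n - j.toNat) else 0

/-!
Since `descPochhammer k = ∑ₗ s(k,l) Xˡ`, the double sum `u_{0,n-j}(n)` is the coefficient of `Xʲ`
in `Pₙ((X - 1)/p)`, where `Pₙ = ∑ₖ C(n,k) (X)ₖ / k!`. By Vandermonde, `Pₙ(m) = C(m+n, n)` at every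
natural `m`, so `n! Pₙ = (X+1)⋯(X+n)` and `w_j(n)` is the coefficient of `Xʲ` in
`∏_{m=1}^{n} (X + pm - 1)`. Multiplying by the next factor `X + p(n+1) - 1` gives the recursion.
-/

open Polynomial Finset
open scoped Nat

theorem Polynomial.coeff_comp_C_mul_X_sub_C {R : Type*} [CommRing R] (f : R[X]) (a b : R)
    (j : ℕ) : (f.comp (C a * (X - C b))).coeff j =
      ∑ l ∈ range (f.natDegree + 1), f.coeff l * a ^ l * (-b) ^ (l - j) * l.choose j := by
  rw [comp_eq_sum_left, sum_over_range _ (fun _ => by simp), finsetSum_coeff]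
  refine sum_congr rfl fun l _ => ?_
  rw [mul_pow, ← C_pow, ← mul_assoc, ← C_mul, coeff_C_mul, sub_eq_add_neg, ← C_neg,
    coeff_X_add_C_pow]
  ring

theorem Polynomial.coeff_X_add_C_mul_zero {R : Type*} [Semiring R] (a : R) (f : R[X]) :
    ((X + C a) * f).coeff 0 = a * f.coeff 0 := by
  rw [add_mul, coeff_add, coeff_X_mul_zero, coeff_C_mul, zero_add]

theorem Polynomial.coeff_X_add_C_mul_succ {R : Type*} [Semiring R] (a : R) (f : R[X]) (j : ℕ) :
    ((X + C a) * f).coeff (j + 1) = f.coeff j + a * f.coeff (j + 1) := by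
  rw [add_mul, coeff_add, coeff_X_mul, coeff_C_mul]

theorem eval_natCast_prod_X_add_succ {R : Type*} [CommSemiring R] (n m : ℕ) :
    (∏ i ∈ range n, (X + C ((i : R) + 1))).eval (m : R) = (n ! : R) * (m + n).choose n := by
  have h := congrArg (Nat.cast : ℕ → R) (Nat.ascFactorial_eq_factorial_mul_choose m n)
  rw [Nat.ascFactorial_eq_prod_range] at h
  push_cast at h
  rw [eval_prod, ← h]
  refine prod_congr rfl fun i _ => ?_
  simp only [eval_add, eval_X, eval_C]
  ring

section binomialSumPoly

variable (K : Type*) [Field K] [CharZero K]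

noncomputable def binomialSumPoly (n : ℕ) : K[X] :=
  ∑ k ∈ range (n + 1), C ((n.choose k : K) / k !) * descPochhammer K k

theorem eval_natCast_binomialSumPoly (n m : ℕ) :
    (binomialSumPoly K n).eval (m : K) = (m + n).choose n := by
  rw [binomialSumPoly, eval_finsetSum, Nat.add_choose_eq,
    Finset.Nat.sum_antidiagonal_eq_sum_range_succ_mk]
  push_cast
  refine sum_congr rfl fun k hk => ?_
  rw [eval_mul, eval_C, descPochhammer_eval_eq_descFactorial,
    Nat.descFactorial_eq_factorial_mul_choose, Nat.choose_symm (mem_range_succ_iff.mp hk)]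
  push_cast
  field_simp [Nat.cast_ne_zero.mpr (Nat.factorial_ne_zero k)]

theorem factorial_mul_binomialSumPoly (n : ℕ) :
    C (n ! : K) * binomialSumPoly K n = ∏ i ∈ range n, (X + C ((i : K) + 1)) := by
  refine eq_of_infinite_eval_eq _ _ ((Set.infinite_range_of_injective Nat.cast_injective).mono ?_)
  rintro _ ⟨m, rfl⟩
  simp only [Set.mem_ofPred_eq, eval_mul, eval_C, eval_natCast_binomialSumPoly,
    eval_natCast_prod_X_add_succ]

end binomialSumPoly

theorem cast_stirlingFirst (k l : ℕ) : (stirlingFirst k l : ℝ) = (descPochhammer ℝ k).coeff l := by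
  rw [stirlingFirst, ← descPochhammer_map (Int.castRingHom ℝ), coeff_map, eq_intCast]

theorem uMat_zero_sub_eq_coeff_comp (p : ℝ) {n j : ℕ} (hj : j ≤ n) :
    uMat p n 0 (n - j) = ((binomialSumPoly ℝ n).comp (C p⁻¹ * (X - C 1))).coeff j := by
  rw [uMat, binomialSumPoly, Polynomial.sum_comp, finsetSum_coeff, ← Nat.range_succ_eq_Icc_zero,
    Nat.sub_sub_self hj, Nat.sub_zero]
  refine sum_congr rfl fun k hk => ?_
  rw [mul_comp, C_comp, coeff_C_mul, coeff_comp_C_mul_X_sub_C, descPochhammer_natDegree, mul_sum,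
    Nat.choose_symm (mem_range_succ_iff.mp hk)]
  refine (sum_congr rfl fun l hl => ?_).trans
    (sum_subset (fun l hl => mem_range_succ_iff.mpr (mem_Icc.mp hl).2) fun l _ hl => ?_)
  · obtain ⟨hjl, -⟩ := mem_Icc.mp hl
    have hsign : ((n : ℤ) - (n - j : ℕ) - l) = -((l - j : ℕ) : ℤ) := by omega
    rw [hsign, zpow_neg, zpow_natCast, ← inv_pow, inv_neg, inv_one, cast_stirlingFirst, inv_pow]
    field_simp
  · have hlj : l < j := by
      simp only [mem_range, mem_Icc, not_and_or, not_le] at *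
      omega
    rw [Nat.choose_eq_zero_of_lt hlj, Nat.cast_zero, mul_zero, mul_zero]

noncomputable def wPoly (p : ℝ) (n : ℕ) : ℝ[X] :=
  ∏ i ∈ range n, (X + C (p * (i + 1) - 1))

theorem wPoly_eq_C_mul_comp {p : ℝ} (hp : p ≠ 0) (n : ℕ) :
    wPoly p n = C (n ! * p ^ n) * (binomialSumPoly ℝ n).comp (C p⁻¹ * (X - C 1)) := by
  rw [C_mul, mul_assoc, mul_left_comm, ← C_comp (a := (n ! : ℝ)), ← mul_comp,
    factorial_mul_binomialSumPoly, Polynomial.prod_comp, C_pow,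
    show C p ^ n = ∏ _i ∈ range n, C p by simp, ← prod_mul_distrib, wPoly]
  refine prod_congr rfl fun i _ => ?_
  rw [add_comp, X_comp, C_comp, mul_add (C p), ← mul_assoc, ← C_mul, mul_inv_cancel₀ hp]
  simp only [C_1, one_mul, C_sub, C_mul, C_add]
  ring

theorem wPoly_succ (p : ℝ) (n : ℕ) : wPoly p (n + 1) = (X + C (p * (n + 1) - 1)) * wPoly p n := by
  rw [wPoly, prod_range_succ, mul_comm, wPoly]

theorem natDegree_wPoly (p : ℝ) (n : ℕ) : (wPoly p n).natDegree = n := by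
  rw [wPoly, natDegree_prod_of_monic _ _ fun i _ => monic_X_add_C _]
  simp only [natDegree_X_add_C, sum_const, card_range, smul_eq_mul, mul_one]

theorem wSF_eq_coeff_wPoly {p : ℝ} (hp : p ≠ 0) (n j : ℕ) : wSF p n j = (wPoly p n).coeff j := by
  rcases le_or_gt j n with hj | hj
  · rw [wSF, if_pos ⟨j.cast_nonneg, by exact_mod_cast hj⟩, Int.toNat_natCast,
      uMat_zero_sub_eq_coeff_comp p hj, wPoly_eq_C_mul_comp hp, coeff_C_mul]
  · rw [wSF, if_neg (by omega), coeff_eq_zero_of_natDegree_lt (by rwa [natDegree_wPoly])]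

/-- `w_0(0) = 1` and
`w_j(n) = (pn-1)·w_j(n-1) + w_{j-1}(n-1)` for `n ≥ 1` and `0 ≤ j ≤ n`. -/
theorem wSF_recursion (p : ℝ) (hp : 0 < p) :
    wSF p 0 0 = 1 ∧
      ∀ (n : ℕ) (j : ℤ), 1 ≤ n → 0 ≤ j → j ≤ n →
        wSF p n j = (p * n - 1) * wSF p (n - 1) j + wSF p (n - 1) (j - 1) := by
  have hp0 : p ≠ 0 := hp.ne'
  refine ⟨by simpa [wPoly] using wSF_eq_coeff_wPoly hp0 0 0, ?_⟩
  rintro n j hn hj -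
  obtain ⟨n, rfl⟩ := Nat.exists_eq_add_of_le' hn
  lift j to ℕ using hj
  rw [Nat.add_sub_cancel, wSF_eq_coeff_wPoly hp0, wSF_eq_coeff_wPoly hp0, wPoly_succ]
  rcases j with _ | j
  · rw [coeff_X_add_C_mul_zero, wSF, if_neg (by omega)]
    push_cast
    ring
  · rw [coeff_X_add_C_mul_succ, show ((j + 1 : ℕ) : ℤ) - 1 = j by push_cast; ring,
      wSF_eq_coeff_wPoly hp0]
    push_cast
    ring
end

section
/- Let b ≥ 2, n ≥ 1 be integers, p a positive integer dividing b-1, and set c = (b-1)/p. For a random uniformly chosen array A ∈ {0,...,b-1}^n defining a (b,n,p)-shuffle, the probability of obtaining a fixed colored permutation σ ∈ Z_p ≀ S_n equals b^{-n} · binom(n + c - d(σ^{-1}), n), where d denotes the number of descents. -/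
/-- The colored permutation group `G_{p,n} = Z_p ≀ S_n`: an element is determined by
a permutation `σ ∈ S_n` together with colors `σ^c : [n] → Z_p`. -/
structure ColoredPerm (p n : ℕ) where
  perm : Equiv.Perm (Fin n)
  color : Fin n → ZMod p

/-- The rank of `(σ(i), σ^c(i))` in the total order
`(1,0)<⋯<(n,0)<(1,p-1)<⋯<(n,p-1)<(1,p-2)<⋯<(n,1)` on `[n] × Z_p`
(as a natural number; `0` for `i` out of range). -/
def kvCP {p n : ℕ} (σ : ColoredPerm p n) (i : ℕ) : ℕ :=
  if h : i < n then
    (if σ.color ⟨i, h⟩ = 0 then 0 else p - (σ.color ⟨i, h⟩).val) * n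
      + (σ.perm ⟨i, h⟩ : ℕ)
  else 0

/-- The number of descents of a colored permutation: a descent at
`i ∈ {1,...,n-1}` iff `(σ(i),σ^c(i)) > (σ(i+1),σ^c(i+1))`, and a descent at `n`
iff `σ^c(n) ≠ 0`. -/
def descCP {p n : ℕ} (σ : ColoredPerm p n) : ℕ :=
  ((Finset.range (n - 1)).filter fun i => kvCP σ (i + 1) < kvCP σ i).card
    + (if h : 0 < n then
        (if σ.color ⟨n - 1, Nat.sub_lt h Nat.one_pos⟩ ≠ 0 then 1 else 0)
      else 0)

/-- The inverse of a colored permutation: `σ⁻¹ = (σ.perm⁻¹, j ↦ -σ^c(σ.perm⁻¹ j))`. -/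
def invCP {p n : ℕ} (σ : ColoredPerm p n) : ColoredPerm p n :=
  ⟨σ.perm⁻¹, fun j => -σ.color (σ.perm⁻¹ j)⟩

/-- The array of labels `A ∈ {0,...,b-1}^n` induces the colored permutation `σ`
under the `(b,n,p)`-shuffle: `σ(i)` is the rank of `i` when sorting positions by
labels (stably), and `σ^c(i) = a_i mod p`. -/
def Induces {p n b : ℕ} (A : Fin n → Fin b) (σ : ColoredPerm p n) : Prop :=
  (∀ i, σ.color i = ((A i : ℕ) : ZMod p)) ∧
    ∀ i j, ((A i : ℕ) < (A j : ℕ) ∨ ((A i : ℕ) = (A j : ℕ) ∧ i < j)) ↔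
      σ.perm i < σ.perm j

/-!
After stable sorting, `v = A ∘ σ.perm⁻¹` lists the labels in increasing order, and `A` induces
`σ` exactly when `v j ≡ k j (mod p)`, where `k j` is the residue fixed by the colour of `σ⁻¹` at
`j`, and `j ↦ (v j, σ⁻¹ j)` is lexicographically strictly increasing. Writing
`v j = q j * p + k j`, the latter says `q j + δ j ≤ q (j + 1)`, where `δ j = 1` exactly at the
descents of `σ⁻¹`, and the bound `v j ≤ b - 1 = c * p` becomes `q n + δ n ≤ c`, where `δ n = 1`
iff `k n ≠ 0`, i.e. iff `σ⁻¹` has a descent at `n`. Subtracting the partial sums of `δ` and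
adding `j` turns `q` into a strictly increasing sequence in `{0, …, n + c - d(σ⁻¹) - 1}`, and
there are `binom(n + c - d(σ⁻¹), n)` of those.
-/

theorem Nat.mul_add_lt_mul_add_iff_toLex {m k k' x x' : ℕ} (hx : x < m) (hx' : x' < m) :
    k * m + x < k' * m + x' ↔ toLex (k, x) < toLex (k', x') := by
  rw [Prod.Lex.toLex_lt_toLex]
  constructor
  · intro h
    rcases lt_trichotomy k k' with hk | rfl | hk
    · exact .inl hk
    · exact .inr ⟨rfl, Nat.lt_of_add_lt_add_left h⟩
    · nlinarith
  · rintro (hk | ⟨rfl, h⟩)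
    · nlinarith
    · exact Nat.add_lt_add_left h _

theorem toLex_mul_add_lt_iff_add_ite_le {α : Type*} [LinearOrder α] {p q q' k k' : ℕ} {y y' : α}
    (hk : k < p) (hk' : k' < p) (hy : y ≠ y') :
    toLex (q * p + k, y) < toLex (q' * p + k', y') ↔
      q + (if toLex (k', y') < toLex (k, y) then 1 else 0) ≤ q' := by
  have heq : q * p + k = q' * p + k' ↔ q = q' ∧ k = k' := by
    constructor
    · intro h
      have h1 := Nat.mul_add_lt_mul_add_iff_toLex (k := q) (k' := q') hk hk'
      have h2 := Nat.mul_add_lt_mul_add_iff_toLex (k := q') (k' := q) hk' hk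
      simp only [Prod.Lex.toLex_lt_toLex] at h1 h2
      omega
    · rintro ⟨rfl, rfl⟩; rfl
  rw [Prod.Lex.toLex_lt_toLex, Nat.mul_add_lt_mul_add_iff_toLex hk hk', heq]
  simp only [Prod.Lex.toLex_lt_toLex]
  rcases hy.lt_or_gt with h | h <;>
    simp only [h, h.not_gt, and_true, and_false, or_false] <;> split_ifs <;> omega

theorem Nat.mul_add_le_mul_iff {p q r c : ℕ} (hr : r < p) :
    q * p + r ≤ c * p ↔ q + (if r = 0 then 0 else 1) ≤ c := by
  split_ifs with h
  · subst h
    simp [Nat.mul_le_mul_right_iff (Nat.zero_lt_of_lt hr)]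
  · constructor
    · intro hle
      by_contra! hc
      have : c * p ≤ q * p := Nat.mul_le_mul_right p (by omega)
      omega
    · intro hle
      nlinarith

theorem Fin.le_val_of_strictMono {m N : ℕ} {f : Fin (m + 1) → Fin N} (hf : StrictMono f)
    (i : Fin (m + 1)) : (i : ℕ) ≤ f i := by
  induction i using Fin.induction with
  | zero => exact Nat.zero_le _
  | succ i ih =>
    have := Fin.strictMono_iff_lt_succ.1 hf i
    rw [Fin.val_succ, ← Fin.val_castSucc]
    exact Nat.succ_le_of_lt (ih.trans_lt this)

theorem Fin.partialSum_last {M : Type*} [AddCommMonoid M] {m : ℕ} (e : Fin m → M) :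
    Fin.partialSum e (Fin.last m) = ∑ i, e i := by
  simp [Fin.partialSum, List.take_of_length_le, Fin.sum_ofFn]

section GapSequences

variable {m : ℕ} (e : Fin m → ℕ) (e' c : ℕ)

def boundedGapSeqs : Set (Fin (m + 1) → ℕ) :=
  {q | (∀ i, q i.castSucc + e i ≤ q i.succ) ∧ q (Fin.last m) + e' ≤ c}

variable {e e' c}

theorem partialSum_le_of_mem_boundedGapSeqs {q : Fin (m + 1) → ℕ}
    (hq : q ∈ boundedGapSeqs e e' c) (i : Fin (m + 1)) : Fin.partialSum e i ≤ q i := by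
  induction i using Fin.induction with
  | zero => simp
  | succ i ih => rw [Fin.partialSum_succ]; have := hq.1 i; omega

theorem strictMono_sub_partialSum_add_of_mem_boundedGapSeqs {q : Fin (m + 1) → ℕ}
    (hq : q ∈ boundedGapSeqs e e' c) :
    StrictMono fun i => q i - Fin.partialSum e i + i := by
  refine Fin.strictMono_iff_lt_succ.2 fun i => ?_
  have := partialSum_le_of_mem_boundedGapSeqs hq i.castSucc
  have := hq.1 i
  simp only [Fin.partialSum_succ, Fin.val_succ, Fin.val_castSucc]
  omega

theorem sub_partialSum_add_lt_of_mem_boundedGapSeqs {q : Fin (m + 1) → ℕ}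
    (hq : q ∈ boundedGapSeqs e e' c) (i : Fin (m + 1)) :
    q i - Fin.partialSum e i + i < m + 1 + c - (∑ j, e j + e') := by
  have hi := (strictMono_sub_partialSum_add_of_mem_boundedGapSeqs hq).monotone (Fin.le_last i)
  have := partialSum_le_of_mem_boundedGapSeqs hq (Fin.last m)
  have := hq.2
  simp only [Fin.partialSum_last, Fin.val_last] at *
  omega

variable (e e' c)

def boundedGapSeqsEquiv :
    boundedGapSeqs e e' c ≃ (Fin (m + 1) ↪o Fin (m + 1 + c - (∑ i, e i + e'))) where
  toFun q := OrderEmbedding.ofStrictMono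
    (fun i => ⟨q.1 i - Fin.partialSum e i + i, sub_partialSum_add_lt_of_mem_boundedGapSeqs q.2 i⟩)
    (strictMono_sub_partialSum_add_of_mem_boundedGapSeqs q.2)
  invFun f := ⟨fun i => f i + Fin.partialSum e i - i, by
    have hle := Fin.le_val_of_strictMono f.strictMono
    refine ⟨fun i => ?_, ?_⟩
    · have := Fin.strictMono_iff_lt_succ.1 f.strictMono i
      have := hle i.castSucc
      simp only [Fin.partialSum_succ, Fin.val_succ, Fin.val_castSucc, Fin.lt_def] at *
      omega
    · have := hle (Fin.last m)
      have := (f (Fin.last m)).isLt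
      simp only [Fin.partialSum_last, Fin.val_last] at *
      omega⟩
  left_inv q := Subtype.ext <| funext fun i => by
    have := partialSum_le_of_mem_boundedGapSeqs q.2 i
    change q.1 i - Fin.partialSum e i + i + Fin.partialSum e i - i = q.1 i
    omega
  right_inv f := by
    ext i
    have := Fin.le_val_of_strictMono f.strictMono i
    change f i + Fin.partialSum e i - i - Fin.partialSum e i + i = (f i : ℕ)
    omega

theorem nat_card_boundedGapSeqs :
    Nat.card (boundedGapSeqs e e' c) = (m + 1 + c - (∑ i, e i + e')).choose (m + 1) := by
  rw [Nat.card_congr (boundedGapSeqsEquiv e e' c),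
    Nat.card_congr Set.powersetCard.ofFinEmbEquiv, Set.powersetCard.card, Nat.card_fin]

end GapSequences

namespace ColoredPerm

section

variable {p n : ℕ} (σ : ColoredPerm p n)

def sortedResidue (j : Fin n) : ℕ := (σ.color (σ.perm⁻¹ j)).val

def sortKey (j : Fin n) : ℕ ×ₗ Fin n := toLex (σ.sortedResidue j, σ.perm⁻¹ j)

theorem sortedResidue_lt [NeZero p] (j : Fin n) : σ.sortedResidue j < p := ZMod.val_lt _

/-- The colour of `σ⁻¹` at `j` is `-σ^c(σ⁻¹ j)`, and its rank in the colour order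
`0, p - 1, …, 1` is the residue of `σ^c(σ⁻¹ j)`. -/
theorem kvCP_invCP [NeZero p] (j : Fin n) :
    kvCP (invCP σ) j = σ.sortedResidue j * n + σ.perm⁻¹ j := by
  rw [kvCP, dif_pos j.isLt]
  simp only [invCP, sortedResidue, neg_eq_zero, Fin.eta]
  split_ifs with h
  · rw [h, ZMod.val_zero]
  · have : NeZero (σ.color (σ.perm⁻¹ j)) := ⟨h⟩
    rw [ZMod.val_neg_of_ne_zero, Nat.sub_sub_self (ZMod.val_lt _).le]

theorem kvCP_invCP_lt_iff [NeZero p] (i j : Fin n) :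
    kvCP (invCP σ) i < kvCP (invCP σ) j ↔ σ.sortKey i < σ.sortKey j := by
  rw [kvCP_invCP, kvCP_invCP,
    Nat.mul_add_lt_mul_add_iff_toLex (σ.perm⁻¹ i).isLt (σ.perm⁻¹ j).isLt, sortKey, sortKey,
    Prod.Lex.toLex_lt_toLex, Prod.Lex.toLex_lt_toLex, Fin.lt_def]

theorem induces_iff [NeZero p] {b : ℕ} (A : Fin n → Fin b) :
    Induces A σ ↔ (∀ j, (A (σ.perm⁻¹ j) : ℕ) % p = σ.sortedResidue j) ∧
      StrictMono fun j => toLex ((A (σ.perm⁻¹ j) : ℕ), σ.perm⁻¹ j) := by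
  have hcolor : ∀ i, σ.color i = ((A i : ℕ) : ZMod p) ↔ (A i : ℕ) % p = (σ.color i).val :=
    fun i => by
      rw [eq_comm, ← (ZMod.val_injective p).eq_iff (a := ((A i : ℕ) : ZMod p)), ZMod.val_natCast]
  set f := fun j => toLex ((A (σ.perm⁻¹ j) : ℕ), σ.perm⁻¹ j)
  have horder : (∀ i j, ((A i : ℕ) < A j ∨ ((A i : ℕ) = A j ∧ i < j)) ↔ σ.perm i < σ.perm j) ↔
      ∀ x y, f x < f y ↔ x < y :=
    σ.perm.forall_congr fun {i} => σ.perm.forall_congr fun {j} => by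
      simp [f, Prod.Lex.toLex_lt_toLex]
  rw [Induces, horder]
  refine and_congr ⟨fun h j => (hcolor _).1 (h _), fun h i => (hcolor i).2 ?_⟩
    ⟨fun h x y hxy => (h x y).2 hxy, fun hf x y => hf.lt_iff_lt⟩
  simpa [sortedResidue] using h (σ.perm i)

end

section

variable {p m : ℕ} (σ : ColoredPerm p (m + 1))

def descentIndicator (i : Fin m) : ℕ := if σ.sortKey i.succ < σ.sortKey i.castSucc then 1 else 0

def finalDescent : ℕ := if σ.sortedResidue (Fin.last m) = 0 then 0 else 1

theorem descCP_invCP [NeZero p] :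
    descCP (invCP σ) = ∑ i, σ.descentIndicator i + σ.finalDescent := by
  rw [descCP, dif_pos m.succ_pos, Finset.card_filter]
  congr 1
  · rw [add_tsub_cancel_right, ← Fin.sum_univ_eq_sum_range]
    exact Finset.sum_congr rfl fun i _ => if_congr (σ.kvCP_invCP_lt_iff i.succ i.castSucc) rfl rfl
  · simp [finalDescent, sortedResidue, invCP, Fin.last]

theorem strictMono_toLex_mul_add_iff [NeZero p] (q : Fin (m + 1) → ℕ) :
    StrictMono (fun j => toLex (q j * p + σ.sortedResidue j, σ.perm⁻¹ j)) ↔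
      ∀ i, q i.castSucc + σ.descentIndicator i ≤ q i.succ := by
  rw [Fin.strictMono_iff_lt_succ]
  exact forall_congr' fun i => toLex_mul_add_lt_iff_add_ite_le (σ.sortedResidue_lt _)
    (σ.sortedResidue_lt _) (σ.perm⁻¹.injective.ne Fin.castSucc_lt_succ.ne)

end

section

variable {p m : ℕ} [NeZero p] (σ : ColoredPerm p (m + 1)) {b c : ℕ}

theorem mul_add_sortedResidue_lt_of_mem {q : Fin (m + 1) → ℕ}
    (hq : q ∈ boundedGapSeqs σ.descentIndicator σ.finalDescent c) (j : Fin (m + 1)) :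
    q j * p + σ.sortedResidue j < c * p + 1 := by
  have hj := ((σ.strictMono_toLex_mul_add_iff q).2 hq.1).monotone (Fin.le_last j)
  have hlast := (Nat.mul_add_le_mul_iff (σ.sortedResidue_lt (Fin.last m))).2 hq.2
  rw [Prod.Lex.toLex_le_toLex] at hj
  omega

theorem div_mul_add_sortedResidue_of_induces {A : Fin (m + 1) → Fin b} (hA : Induces A σ)
    (j : Fin (m + 1)) :
    (A (σ.perm⁻¹ j) : ℕ) / p * p + σ.sortedResidue j = A (σ.perm⁻¹ j) := by
  rw [← ((σ.induces_iff A).1 hA).1 j, Nat.div_add_mod']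

theorem div_mem_boundedGapSeqs_of_induces (hb : b = c * p + 1) {A : Fin (m + 1) → Fin b}
    (hA : Induces A σ) :
    (fun j => (A (σ.perm⁻¹ j) : ℕ) / p) ∈
      boundedGapSeqs σ.descentIndicator σ.finalDescent c := by
  have hdiv := σ.div_mul_add_sortedResidue_of_induces hA
  have hmono := ((σ.induces_iff A).1 hA).2
  refine ⟨(σ.strictMono_toLex_mul_add_iff fun j => (A (σ.perm⁻¹ j) : ℕ) / p).1
    (by simpa only [hdiv] using hmono), ?_⟩
  rw [finalDescent, ← Nat.mul_add_le_mul_iff (σ.sortedResidue_lt _), hdiv]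
  have := (A (σ.perm⁻¹ (Fin.last m))).isLt
  omega

theorem induces_of_mem_boundedGapSeqs {q : Fin (m + 1) → ℕ}
    (hq : q ∈ boundedGapSeqs σ.descentIndicator σ.finalDescent c) {A : Fin (m + 1) → Fin b}
    (hA : ∀ i, (A i : ℕ) = q (σ.perm i) * p + σ.sortedResidue (σ.perm i)) :
    Induces A σ := by
  have hA' : ∀ j, (A (σ.perm⁻¹ j) : ℕ) = q j * p + σ.sortedResidue j := fun j => by
    simpa using hA (σ.perm⁻¹ j)
  simp only [σ.induces_iff, hA', Nat.mul_add_mod_self_right]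
  exact ⟨fun j => Nat.mod_eq_of_lt (σ.sortedResidue_lt j),
    (σ.strictMono_toLex_mul_add_iff q).2 hq.1⟩

def inducesEquiv (hb : b = c * p + 1) :
    {A : Fin (m + 1) → Fin b // Induces A σ} ≃
      boundedGapSeqs σ.descentIndicator σ.finalDescent c where
  toFun A := ⟨_, σ.div_mem_boundedGapSeqs_of_induces hb A.2⟩
  invFun q := ⟨fun i => ⟨q.1 (σ.perm i) * p + σ.sortedResidue (σ.perm i),
      hb ▸ σ.mul_add_sortedResidue_lt_of_mem q.2 _⟩,
    σ.induces_of_mem_boundedGapSeqs q.2 fun _ => rfl⟩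
  left_inv A := by
    ext i
    simpa using σ.div_mul_add_sortedResidue_of_induces A.2 (σ.perm i)
  right_inv q := by
    ext j
    have : (q.1 j * p + σ.sortedResidue j) / p = q.1 j := by
      rw [add_comm, Nat.add_mul_div_right _ _ (NeZero.pos p),
        Nat.div_eq_of_lt (σ.sortedResidue_lt j), zero_add]
    simpa using this

theorem nat_card_induces (hb : b = c * p + 1) :
    Nat.card {A : Fin (m + 1) → Fin b // Induces A σ} =
      (m + 1 + c - descCP (invCP σ)).choose (m + 1) := by
  rw [Nat.card_congr (σ.inducesEquiv hb), nat_card_boundedGapSeqs, descCP_invCP]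

end

end ColoredPerm

theorem shuffle_probability_general (p n b : ℕ) [NeZero p] (hb : 2 ≤ b)
    (hdvd : p ∣ b - 1) (σ : ColoredPerm p n) :
    (Nat.card {A : Fin n → Fin b // Induces A σ} : ℝ) / b ^ n =
      (b : ℝ) ^ (-(n : ℤ)) *
        ((n + (b - 1) / p - descCP (invCP σ)).choose n : ℝ) := by
  rcases n with _ | m
  · simp [Induces]
  have hbc : b = (b - 1) / p * p + 1 := by rw [Nat.div_mul_cancel hdvd]; omega
  rw [σ.nat_card_induces hbc, zpow_neg, zpow_natCast, div_eq_inv_mul]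

/-- for `p ∣ b - 1` and `c = (b-1)/p`, the probability that a
uniformly random array `A ∈ {0,...,b-1}^n` induces the colored permutation `σ`
under the `(b,n,p)`-shuffle equals `b^{-n}·binom(n + c - d(σ⁻¹), n)`. -/
theorem shuffle_probability (p n b : ℕ) [NeZero p] (hb : 2 ≤ b) (hn : 1 ≤ n)
    (hdvd : p ∣ b - 1) (σ : ColoredPerm p n) :
    (Nat.card {A : Fin n → Fin b // Induces A σ} : ℝ) / b ^ n =
      (b : ℝ) ^ (-(n : ℤ)) *
        ((n + (b - 1) / p - descCP (invCP σ)).choose n : ℝ) :=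
  shuffle_probability_general p n b hb hdvd σ
end

section
/- Let p ≥ 1 be an integer and let E_p(n,k) be the number of elements of the colored permutation group G_{p,n} with exactly k descents, and F_p(n,k) the number with exactly k dash-descents. Then F_p satisfies the recursion F_p(n,k) = (pk+p-1)·F_p(n-1,k) + (p(n-k)+1)·F_p(n-1,k-1), and for p ≠ 1, F_p(n,k) = E_p(n, n-k). -/
/-- The rank of `(σ(i), σ^c(i))` in the dash-order
`(1,0)<'⋯<'(n,0)<'(1,1)<'⋯<'(n,1)<'⋯<'(1,p-1)<'⋯<'(n,p-1)`. -/
def kvCP' {p n : ℕ} (σ : ColoredPerm p n) (i : ℕ) : ℕ :=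
  if h : i < n then (σ.color ⟨i, h⟩).val * n + (σ.perm ⟨i, h⟩ : ℕ) else 0

/-- The number of dash-descents of a colored permutation: a dash-descent at
`i ∈ {1,...,n-1}` iff `(σ(i),σ^c(i)) >' (σ(i+1),σ^c(i+1))`, and a dash-descent at
`n` iff `σ^c(n) = p - 1`. -/
def descCP' {p n : ℕ} (σ : ColoredPerm p n) : ℕ :=
  ((Finset.range (n - 1)).filter fun i => kvCP' σ (i + 1) < kvCP' σ i).card
    + (if h : 0 < n then
        (if σ.color ⟨n - 1, Nat.sub_lt h Nat.one_pos⟩ = ((p - 1 : ℕ) : ZMod p)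
          then 1 else 0)
      else 0)

/-- `E_p(n,k)`: the number of elements of `G_{p,n}` with exactly `k` descents. -/
noncomputable def Ecount (p n k : ℕ) : ℕ := Nat.card {σ : ColoredPerm p n // descCP σ = k}

/-- `F_p(n,k)`: the number of elements of `G_{p,n}` with exactly `k` dash-descents. -/
noncomputable def Fcount (p n k : ℕ) : ℕ := Nat.card {σ : ColoredPerm p n // descCP' σ = k}

/-!
Deleting the letter `n` from `σ ∈ G_{p,n}`, remembering its position `j` and colour `c`, is a
bijection `G_{p,n} ≃ G_{p,n-1} × [n] × Z_p`. In the dash order, `(n, c)` lies directly above every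
letter of colour `≤ c` and below every other letter, so inserting it into a gap `(a, b)` of
`τ ∈ G_{p,n-1}` changes the number of dash-descents by `[a >' (n,c)] + [(n,c) >' b] - [a >' b]`,
which is `0` or `1` (the two end gaps are closed off by a bottom letter and by a sentinel that
encodes the dash-descent at `n`). Summed over the `p` colours the change is
`col a + (p - col b) - p [a >' b]`, and summed over the gaps this telescopes: if `τ` has `k`
dash-descents, exactly `p (n - 1 - k) + 1` of the `n p` insertions create a new dash-descent and
the other `p k + p - 1` do not.

For the second statement, `σ ↦ (rev ∘ σ, σ^c + 1)` turns the dash order into the reverse of the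
descent order, so every position `i < n` is a descent of the image or a dash-descent of `σ`, but
not both; at `n` the conditions `σ^c(n) + 1 ≠ 0` and `σ^c(n) = p - 1` are complementary too.
-/

open Finset

section Descents

variable {α : Type*} [LinearOrder α]

def descentCount (w : ℕ → α) (N : ℕ) : ℕ := #{i ∈ range N | w (i + 1) < w i}

def insertAt (w : ℕ → α) (j : ℕ) (x : α) (i : ℕ) : α :=
  if i < j then w i else if i = j then x else w (i - 1)

theorem descentCount_insertAt (w : ℕ → α) (x : α) {j N : ℕ} (hj : j < N) :
    descentCount (insertAt w (j + 1) x) (N + 1) + (if w (j + 1) < w j then 1 else 0)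
      = descentCount w N + (if x < w j then 1 else 0) + (if w (j + 1) < x then 1 else 0) := by
  obtain ⟨r, rfl⟩ : ∃ r, N = j + (r + 1) := ⟨N - j - 1, by omega⟩
  simp only [descentCount, card_filter, show j + (r + 1) + 1 = j + (r + 2) from rfl,
    sum_range_add, sum_range_succ']
  have hhead : ∑ i ∈ range j, (if insertAt w (j + 1) x (i + 1) < insertAt w (j + 1) x i
      then 1 else 0) = ∑ i ∈ range j, (if w (i + 1) < w i then 1 else 0) :=
    sum_congr rfl fun i hi => by
      have := mem_range.mp hi
      simp [insertAt, show i + 1 < j + 1 by omega, show i < j + 1 by omega]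
  have htail : ∑ i ∈ range r, (if insertAt w (j + 1) x (j + (i + 1 + 1) + 1)
      < insertAt w (j + 1) x (j + (i + 1 + 1)) then 1 else 0)
      = ∑ i ∈ range r, (if w (j + (i + 1) + 1) < w (j + (i + 1)) then 1 else 0) :=
    sum_congr rfl fun i _ => by
      simp [insertAt, show ¬ j + (i + 1 + 1) + 1 < j + 1 by omega,
        show ¬ j + (i + 1 + 1) < j + 1 by omega,
        show j + (i + 1 + 1) + 1 - 1 = j + (i + 1) + 1 by omega,
        show j + (i + 1 + 1) - 1 = j + (i + 1) by omega]
  have hleft : insertAt w (j + 1) x (j + 0 + 1) = x := by simp [insertAt]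
  have hright : insertAt w (j + 1) x (j + (0 + 1) + 1) = w (j + 1) := by
    simp [insertAt, show j + (0 + 1) + 1 - 1 = j + 1 by omega]
  have hprev : insertAt w (j + 1) x (j + 0) = w j := by simp [insertAt]
  rw [hhead, htail, hleft, hright, hprev]
  simp only [add_zero]
  omega

theorem descentCount_add_descentCount_of_lt_iff {f g : ℕ → α} {N : ℕ}
    (hfg : ∀ i < N, f (i + 1) < f i ↔ g i < g (i + 1)) (hg : ∀ i < N, g (i + 1) ≠ g i) :
    descentCount f N + descentCount g N = N := by
  have hf : descentCount f N = #{i ∈ range N | ¬ g (i + 1) < g i} :=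
    congrArg card <| filter_congr fun i hi => by
      rw [hfg i (mem_range.mp hi), not_lt, lt_iff_le_and_ne,
        and_iff_left (hg i (mem_range.mp hi)).symm]
  rw [hf, add_comm, descentCount, card_filter_add_card_filter_not, card_range]

theorem ite_lt_add_ite_lt_eq_or (a b x : α) :
    ((if x < a then 1 else 0) + (if b < x then 1 else 0) = (if b < a then 1 else 0)) ∨
      ((if x < a then 1 else 0) + (if b < x then 1 else 0) = (if b < a then 1 else 0) + 1) := by
  split_ifs <;> grind

end Descents

theorem mul_add_lt_mul_add_iff {M d₁ d₂ s₁ s₂ : ℕ} (h₁ : s₁ < M) (h₂ : s₂ < M) :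
    d₁ * M + s₁ < d₂ * M + s₂ ↔ toLex (d₁, s₁) < toLex (d₂, s₂) := by
  rw [Prod.Lex.toLex_lt_toLex]
  rcases lt_trichotomy d₁ d₂ with h | rfl | h
  · have : (d₁ + 1) * M ≤ d₂ * M := Nat.mul_le_mul_right M h
    simp only [h, true_or, iff_true]
    nlinarith
  · simp
  · have : (d₂ + 1) * M ≤ d₁ * M := Nat.mul_le_mul_right M h
    simp only [h.not_gt, h.ne', false_and, or_self, iff_false, not_lt]
    nlinarith

theorem sum_range_add_tsub_add {f : ℕ → ℕ} {b N : ℕ} (hf : ∀ i, f i ≤ b) :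
    ∑ i ∈ range N, (f i + (b - f (i + 1))) + f N = N * b + f 0 := by
  induction N with
  | zero => simp
  | succ N ih =>
    rw [sum_range_succ, Nat.succ_mul]
    have := hf (N + 1)
    omega

theorem sum_eq_mul_card_add_card_filter_succ {ι : Type*} (s : Finset ι) {f : ι → ℕ} {t : ℕ}
    (hf : ∀ x ∈ s, f x = t ∨ f x = t + 1) : ∑ x ∈ s, f x = t * #s + #{x ∈ s | f x = t + 1} := by
  rw [card_filter, mul_comm, ← smul_eq_mul, ← sum_const, ← sum_add_distrib]
  refine sum_congr rfl fun x hx => ?_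
  rcases hf x hx with h | h <;> simp [h]

namespace ZMod

variable {p : ℕ} [NeZero p]

theorem val_neg_add_one (c : ZMod p) : (-(c + 1)).val = p - 1 - c.val := by
  have hc := ZMod.val_lt c
  have hcast : -(c + 1) = ((p - 1 - c.val : ℕ) : ZMod p) := by
    rw [Nat.cast_sub (by omega), Nat.cast_sub NeZero.one_le, natCast_self, natCast_zmod_val]
    ring
  rw [hcast, val_natCast_of_lt (by omega)]

theorem natCast_sub_one : ((p - 1 : ℕ) : ZMod p) = -1 := by
  rw [Nat.cast_sub NeZero.one_le, natCast_self, zero_sub, Nat.cast_one]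

theorem card_filter_val_lt {k : ℕ} (hk : k ≤ p) : #{c : ZMod p | c.val < k} = k := by
  obtain ⟨q, rfl⟩ : ∃ q, p = q + 1 := ⟨p - 1, (Nat.succ_pred_eq_of_pos (NeZero.pos p)).symm⟩
  exact Fin.card_filter_val_lt.trans (min_eq_right hk)

theorem card_filter_le_val {k : ℕ} (hk : k ≤ p) : #{c : ZMod p | k ≤ c.val} = p - k := by
  have h := card_filter_add_card_filter_not (s := (univ : Finset (ZMod p))) (fun c => c.val < k)
  simp only [not_lt, card_univ, ZMod.card, card_filter_val_lt hk] at h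
  omega

theorem card_toLex_val_lt {m : ℕ} {a : ℕ ×ₗ ℕ} (ha₁ : (ofLex a).1 ≤ p) (ha₂ : (ofLex a).2 ≤ m) :
    #{c : ZMod p | toLex (c.val, m + 1) < a} = (ofLex a).1 := by
  rw [← card_filter_val_lt ha₁]
  congr 1
  exact filter_congr fun c _ => by rw [Prod.Lex.lt_iff]; simp; omega

theorem card_lt_toLex_val {m : ℕ} {a : ℕ ×ₗ ℕ} (ha₁ : (ofLex a).1 ≤ p) (ha₂ : (ofLex a).2 ≤ m) :
    #{c : ZMod p | a < toLex (c.val, m + 1)} = p - (ofLex a).1 := by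
  rw [← card_filter_le_val ha₁]
  congr 1
  exact filter_congr fun c _ => by rw [Prod.Lex.lt_iff]; simp; omega

end ZMod

namespace ColoredPerm

variable {p n m : ℕ}

@[ext] theorem ext {σ τ : ColoredPerm p n} (hperm : σ.perm = τ.perm) (hcolor : σ.color = τ.color) :
    σ = τ := by
  cases σ; cases τ; congr

def equivProd : ColoredPerm p n ≃ Equiv.Perm (Fin n) × (Fin n → ZMod p) where
  toFun σ := (σ.perm, σ.color)
  invFun x := ⟨x.1, x.2⟩

instance [NeZero p] : Fintype (ColoredPerm p n) := Fintype.ofEquiv _ equivProd.symm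

theorem card_eq [NeZero p] : Fintype.card (ColoredPerm p n) = n.factorial * p ^ n := by
  rw [Fintype.card_congr equivProd, Fintype.card_prod, Fintype.card_perm, Fintype.card_fun,
    ZMod.card, Fintype.card_fin]

def complEquiv : ColoredPerm p n ≃ ColoredPerm p n where
  toFun σ := ⟨σ.perm.trans Fin.revPerm, σ.color + 1⟩
  invFun σ := ⟨σ.perm.trans Fin.revPerm, σ.color - 1⟩
  left_inv σ := ext (by ext; simp) (by simp)
  right_inv σ := ext (by ext; simp) (by simp)

theorem kvCP'_lt_mul [NeZero p] (σ : ColoredPerm p n) {i : ℕ} (hi : i < n) :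
    kvCP' σ i < p * n := by
  have hv : (σ.color ⟨i, hi⟩).val + 1 ≤ p := ZMod.val_lt _
  have hs : (σ.perm ⟨i, hi⟩ : ℕ) < n := (σ.perm ⟨i, hi⟩).is_lt
  rw [kvCP', dif_pos hi]
  nlinarith

theorem kvCP'_mod (σ : ColoredPerm p n) {i : ℕ} (hi : i < n) :
    kvCP' σ i % n = σ.perm ⟨i, hi⟩ := by
  rw [kvCP', dif_pos hi, Nat.mul_add_mod', Nat.mod_eq_of_lt (σ.perm _).is_lt]

/-- The descent-order rank of a colour `c` is `(-c).val`. -/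
theorem kvCP_complEquiv_add_kvCP' [NeZero p] (σ : ColoredPerm p n) {i : ℕ} (hi : i < n) :
    kvCP (complEquiv σ) i + kvCP' σ i = p * n - 1 := by
  have hv : (σ.color ⟨i, hi⟩).val < p := ZMod.val_lt _
  have hs : (σ.perm ⟨i, hi⟩ : ℕ) < n := (σ.perm ⟨i, hi⟩).is_lt
  have hpn : p * n = (p - 1 - (σ.color ⟨i, hi⟩).val) * n + (σ.color ⟨i, hi⟩).val * n + n := by
    rw [← add_mul, ← add_one_mul]
    congr
    omega
  simp only [kvCP, kvCP', dif_pos hi]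
  change (if σ.color ⟨i, hi⟩ + 1 = 0 then 0 else p - (σ.color ⟨i, hi⟩ + 1).val) * n
      + (Fin.rev (σ.perm ⟨i, hi⟩) : ℕ) + _ = _
  rw [← ZMod.neg_val, ZMod.val_neg_add_one, Fin.val_rev]
  omega

theorem descCP_complEquiv_add_descCP' [NeZero p] (σ : ColoredPerm p n) :
    descCP (complEquiv σ) + descCP' σ = n := by
  rcases n with _ | N
  · simp [descCP, descCP']
  have hlast : (complEquiv σ).color (Fin.last N) ≠ 0
      ↔ ¬ σ.color (Fin.last N) = ((p - 1 : ℕ) : ZMod p) := by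
    rw [ZMod.natCast_sub_one, ← add_eq_zero_iff_eq_neg]
    rfl
  have hdesc : descentCount (kvCP (complEquiv σ)) N + descentCount (kvCP' σ) N = N := by
    refine descentCount_add_descentCount_of_lt_iff (fun i hi => ?_) (fun i hi h => ?_)
    · have := kvCP_complEquiv_add_kvCP' σ (show i < N + 1 by omega)
      have := kvCP_complEquiv_add_kvCP' σ (show i + 1 < N + 1 by omega)
      have := kvCP'_lt_mul σ (show i < N + 1 by omega)
      have := kvCP'_lt_mul σ (show i + 1 < N + 1 by omega)
      omega
    · have := congrArg (· % (N + 1)) h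
      simp only [kvCP'_mod σ (show i < N + 1 by omega),
        kvCP'_mod σ (show i + 1 < N + 1 by omega)] at this
      simpa using σ.perm.injective (Fin.ext this)
  change descentCount _ N + (if (complEquiv σ).color (Fin.last N) ≠ 0 then 1 else 0)
    + (descentCount _ N + (if σ.color (Fin.last N) = ((p - 1 : ℕ) : ZMod p) then 1 else 0))
    = N + 1
  rw [if_congr hlast rfl rfl]
  split_ifs <;> omega

/-- The dash-ranks of `σ` as pairs `(colour, value + 1)` in the lexicographic order, framed by
`(0, 0)`, which lies below everything, and `(p - 1, 0)`, which lies below exactly the letters of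
colour `p - 1`; so the descents of this word are the dash-descents of `σ`, including the one
at `n`. -/
def dashWord (σ : ColoredPerm p n) : ℕ → ℕ ×ₗ ℕ
  | 0 => toLex (0, 0)
  | i + 1 => if h : i < n then toLex ((σ.color ⟨i, h⟩).val, (σ.perm ⟨i, h⟩ : ℕ) + 1)
      else toLex (p - 1, 0)

theorem dashWord_fst_lt [NeZero p] (σ : ColoredPerm p n) (i : ℕ) :
    (ofLex (dashWord σ i)).1 < p := by
  rcases i with _ | i
  · exact NeZero.pos p
  · simp only [dashWord]
    split_ifs
    · exact ZMod.val_lt _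
    · exact Nat.sub_lt (NeZero.pos p) one_pos

theorem dashWord_snd_le (σ : ColoredPerm p n) (i : ℕ) : (ofLex (dashWord σ i)).2 ≤ n := by
  rcases i with _ | i
  · exact Nat.zero_le n
  · simp only [dashWord]
    split_ifs
    · exact (σ.perm _).is_lt
    · exact Nat.zero_le n

theorem kvCP'_lt_kvCP'_iff (σ : ColoredPerm p n) {i i' : ℕ} (hi : i < n) (hi' : i' < n) :
    kvCP' σ i < kvCP' σ i' ↔ dashWord σ (i + 1) < dashWord σ (i' + 1) := by
  simp only [kvCP', dashWord, dif_pos hi, dif_pos hi',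
    mul_add_lt_mul_add_iff (σ.perm _).is_lt (σ.perm _).is_lt, Prod.Lex.toLex_lt_toLex,
    add_lt_add_iff_right]

theorem dashWord_last_lt_iff [NeZero p] (σ : ColoredPerm p n) {i : ℕ} (hi : i < n) :
    dashWord σ (n + 1) < dashWord σ (i + 1) ↔ σ.color ⟨i, hi⟩ = ((p - 1 : ℕ) : ZMod p) := by
  have hv := ZMod.val_lt (σ.color ⟨i, hi⟩)
  rw [← (ZMod.val_injective p).eq_iff,
    ZMod.val_natCast_of_lt (Nat.sub_lt (NeZero.pos p) one_pos)]
  simp only [dashWord, lt_irrefl, dif_neg, dif_pos hi, not_false_eq_true,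
    Prod.Lex.toLex_lt_toLex]
  omega

theorem descCP'_eq_descentCount [NeZero p] (σ : ColoredPerm p n) :
    descCP' σ = descentCount (dashWord σ) (n + 1) := by
  have hfirst : ¬ dashWord σ 1 < dashWord σ 0 := not_lt_bot
  rw [descentCount, card_filter, sum_range_succ', if_neg hfirst, add_zero]
  rcases n with _ | N
  · simp [descCP']
  rw [sum_range_succ, descCP', card_filter, dif_pos N.succ_pos,
    if_congr (dashWord_last_lt_iff σ N.lt_succ_self) rfl rfl]
  congr 1
  exact sum_congr rfl fun i hi => by
    have := mem_range.mp hi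
    exact if_congr (kvCP'_lt_kvCP'_iff σ (by omega) (by omega)) rfl rfl

theorem descCP'_le (σ : ColoredPerm p n) : descCP' σ ≤ n := by
  unfold descCP'
  have := (card_filter_le (range (n - 1)) fun i => kvCP' σ (i + 1) < kvCP' σ i).trans_eq
    (card_range (n - 1))
  split_ifs <;> omega

def insertMax (τ : ColoredPerm p m) (j : Fin (m + 1)) (c : ZMod p) : ColoredPerm p (m + 1) where
  perm := (finSuccEquiv' j).trans
    ((Equiv.optionCongr τ.perm).trans (finSuccEquiv' (Fin.last m)).symm)
  color := Fin.insertNth j c τ.color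

@[simp] theorem insertMax_perm_self (τ : ColoredPerm p m) (j : Fin (m + 1)) (c : ZMod p) :
    (insertMax τ j c).perm j = Fin.last m := by
  simp [insertMax]

@[simp] theorem insertMax_perm_succAbove (τ : ColoredPerm p m) (j : Fin (m + 1)) (c : ZMod p)
    (i : Fin m) : (insertMax τ j c).perm (j.succAbove i) = (τ.perm i).castSucc := by
  simp [insertMax]

@[simp] theorem insertMax_color (τ : ColoredPerm p m) (j : Fin (m + 1)) (c : ZMod p) :
    (insertMax τ j c).color = Fin.insertNth j c τ.color := rfl

theorem insertMax_injective :
    Function.Injective fun x : ColoredPerm p m × Fin (m + 1) × ZMod p =>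
      insertMax x.1 x.2.1 x.2.2 := by
  rintro ⟨τ, j, c⟩ ⟨τ', j', c'⟩ h
  simp only at h
  obtain rfl : j = j' := (insertMax τ' j' c').perm.injective <| by
    rw [insertMax_perm_self, ← h, insertMax_perm_self]
  have hcolor := congrArg ColoredPerm.color h
  simp only [insertMax_color] at hcolor
  obtain ⟨rfl, hτcolor⟩ := Fin.insertNth_injective2 hcolor
  have hperm : τ.perm = τ'.perm := Equiv.ext fun i => Fin.castSucc_injective m <| by
    rw [← insertMax_perm_succAbove τ j c, h, insertMax_perm_succAbove]
  rw [ext hperm hτcolor]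

theorem card_prod_eq_card_succ [NeZero p] :
    Fintype.card (ColoredPerm p m × Fin (m + 1) × ZMod p)
      = Fintype.card (ColoredPerm p (m + 1)) := by
  simp only [Fintype.card_prod, card_eq, Fintype.card_fin, ZMod.card, Nat.factorial_succ,
    pow_succ]
  ring

noncomputable def insertMaxEquiv [NeZero p] :
    ColoredPerm p m × Fin (m + 1) × ZMod p ≃ ColoredPerm p (m + 1) :=
  Equiv.ofBijective _ <| (Fintype.bijective_iff_injective_and_card _).mpr
    ⟨insertMax_injective, card_prod_eq_card_succ⟩

theorem dashWord_insertMax (τ : ColoredPerm p m) (j : Fin (m + 1)) (c : ZMod p) :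
    dashWord (insertMax τ j c) = insertAt (dashWord τ) (j + 1) (toLex (c.val, m + 1)) := by
  funext i
  rcases i with _ | i
  · simp [dashWord, insertAt]
  rcases lt_trichotomy i j with h | rfl | h
  · have hi : i < m := by omega
    have hpos : (⟨i, by omega⟩ : Fin (m + 1)) = j.succAbove ⟨i, hi⟩ := by
      rw [Fin.succAbove_of_castSucc_lt _ _ (by simpa [Fin.lt_def] using h)]
      rfl
    simp [dashWord, insertAt, h, hi, hi.le, hpos]
  · simp [dashWord, insertAt, j.is_le]
  · obtain ⟨i, rfl⟩ : ∃ i', i = i' + 1 := ⟨i - 1, by omega⟩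
    by_cases hi : i < m
    · have hpos : (⟨i + 1, by omega⟩ : Fin (m + 1)) = j.succAbove ⟨i, hi⟩ := by
        rw [Fin.succAbove_of_le_castSucc _ _ (by simp [Fin.le_def]; omega)]
        rfl
      simp [dashWord, insertAt, hi, hpos, show ¬ i + 1 < j by omega, show i + 1 ≠ j by omega]
    · simp [dashWord, insertAt, hi, show ¬ i + 1 < j by omega, show i + 1 ≠ j by omega]

theorem descCP'_insertMax_add [NeZero p] (τ : ColoredPerm p m) (j : Fin (m + 1)) (c : ZMod p) :
    descCP' (insertMax τ j c) + (if dashWord τ (j + 1) < dashWord τ j then 1 else 0)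
      = descCP' τ + (if toLex (c.val, m + 1) < dashWord τ j then 1 else 0)
        + (if dashWord τ (j + 1) < toLex (c.val, m + 1) then 1 else 0) := by
  rw [descCP'_eq_descentCount, descCP'_eq_descentCount, dashWord_insertMax]
  exact descentCount_insertAt _ _ j.is_lt

theorem descCP'_insertMax_eq_or [NeZero p] (τ : ColoredPerm p m) (j : Fin (m + 1))
    (c : ZMod p) :
    descCP' (insertMax τ j c) = descCP' τ ∨ descCP' (insertMax τ j c) = descCP' τ + 1 := by
  have := descCP'_insertMax_add τ j c
  rcases ite_lt_add_ite_lt_eq_or (dashWord τ j) (dashWord τ (j + 1)) (toLex (c.val, m + 1))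
    with h | h <;> omega

theorem sum_descCP'_insertMax_add [NeZero p] (τ : ColoredPerm p m) (j : Fin (m + 1)) :
    ∑ c : ZMod p, descCP' (insertMax τ j c)
        + p * (if dashWord τ (j + 1) < dashWord τ j then 1 else 0)
      = p * descCP' τ
        + ((ofLex (dashWord τ j)).1 + (p - (ofLex (dashWord τ (j + 1))).1)) := by
  have h := sum_congr rfl fun c (_ : c ∈ univ) => descCP'_insertMax_add τ j c
  simp only [sum_add_distrib, sum_const, card_univ, ZMod.card, smul_eq_mul, ← card_filter] at h
  rw [ZMod.card_toLex_val_lt (dashWord_fst_lt τ j).le (dashWord_snd_le τ j),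
    ZMod.card_lt_toLex_val (dashWord_fst_lt τ _).le (dashWord_snd_le τ _)] at h
  linarith

theorem sum_sum_descCP'_insertMax_add [NeZero p] (τ : ColoredPerm p m) :
    ∑ j : Fin (m + 1), ∑ c : ZMod p, descCP' (insertMax τ j c) + p * descCP' τ
      = (m + 1) * (p * descCP' τ) + p * m + 1 := by
  have hslots := sum_congr rfl fun j (_ : j ∈ univ) => sum_descCP'_insertMax_add τ j
  rw [sum_add_distrib, sum_add_distrib, ← mul_sum, sum_const, card_univ, Fintype.card_fin,
    smul_eq_mul,
    Fin.sum_univ_eq_sum_range (fun j => if dashWord τ (j + 1) < dashWord τ j then 1 else 0),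
    Fin.sum_univ_eq_sum_range
      (fun j => (ofLex (dashWord τ j)).1 + (p - (ofLex (dashWord τ (j + 1))).1))] at hslots
  have hdesc : ∑ j ∈ range (m + 1), (if dashWord τ (j + 1) < dashWord τ j then 1 else 0)
      = descCP' τ := by
    rw [descCP'_eq_descentCount, descentCount, card_filter]
  have htele := sum_range_add_tsub_add (N := m + 1) fun i => (dashWord_fst_lt τ i).le
  have hlast : (ofLex (dashWord τ (m + 1))).1 = p - 1 := by simp [dashWord]
  have hfirst : (ofLex (dashWord τ 0)).1 = 0 := rfl
  rw [hlast, hfirst] at htele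
  rw [hdesc] at hslots
  have := NeZero.pos p
  have : (m + 1) * p = p * m + p := by ring
  omega

theorem card_descCP'_insertMax_eq_succ [NeZero p] (τ : ColoredPerm p m) :
    #{x : Fin (m + 1) × ZMod p | descCP' (insertMax τ x.1 x.2) = descCP' τ + 1}
      = p * (m - descCP' τ) + 1 := by
  have hsum := sum_eq_mul_card_add_card_filter_succ (univ : Finset (Fin (m + 1) × ZMod p))
    fun x _ => descCP'_insertMax_eq_or τ x.1 x.2
  rw [Fintype.sum_prod_type, card_univ, Fintype.card_prod, Fintype.card_fin, ZMod.card] at hsum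
  dsimp only at hsum
  have htotal := sum_sum_descCP'_insertMax_add τ
  have hsplit : p * (m - descCP' τ) + p * descCP' τ = p * m := by
    rw [← mul_add, Nat.sub_add_cancel (descCP'_le τ)]
  have : descCP' τ * ((m + 1) * p) = (m + 1) * (p * descCP' τ) := by ring
  omega

theorem card_descCP'_insertMax_eq_self [NeZero p] (τ : ColoredPerm p m) :
    #{x : Fin (m + 1) × ZMod p | descCP' (insertMax τ x.1 x.2) = descCP' τ}
      = p * descCP' τ + p - 1 := by
  have hcompl := card_filter_add_card_filter_not (s := (univ : Finset (Fin (m + 1) × ZMod p)))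
    fun x => descCP' (insertMax τ x.1 x.2) = descCP' τ + 1
  have hself : (univ.filter fun x : Fin (m + 1) × ZMod p =>
        ¬ descCP' (insertMax τ x.1 x.2) = descCP' τ + 1)
      = univ.filter fun x => descCP' (insertMax τ x.1 x.2) = descCP' τ :=
    filter_congr fun x _ => by have := descCP'_insertMax_eq_or τ x.1 x.2; omega
  rw [hself, card_descCP'_insertMax_eq_succ, card_univ, Fintype.card_prod, Fintype.card_fin,
    ZMod.card] at hcompl
  have hsplit : p * (m - descCP' τ) + p * descCP' τ = p * m := by
    rw [← mul_add, Nat.sub_add_cancel (descCP'_le τ)]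
  have : (m + 1) * p = p * m + p := by ring
  have := NeZero.pos p
  omega

theorem card_descCP'_insertMax_eq [NeZero p] (τ : ColoredPerm p m) {k : ℕ} (hk : 1 ≤ k) :
    #{x : Fin (m + 1) × ZMod p | descCP' (insertMax τ x.1 x.2) = k}
      = (if descCP' τ = k then p * k + p - 1 else 0)
        + (if descCP' τ = k - 1 then p * (m + 1 - k) + 1 else 0) := by
  by_cases hself : descCP' τ = k
  · rw [if_pos hself, if_neg (by omega), ← hself, card_descCP'_insertMax_eq_self, add_zero]
  by_cases hsucc : descCP' τ = k - 1
  · obtain rfl : k = descCP' τ + 1 := by omega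
    rw [if_neg hself, if_pos hsucc, card_descCP'_insertMax_eq_succ, Nat.add_sub_add_right,
      zero_add]
  rw [if_neg hself, if_neg hsucc, card_eq_zero, filter_eq_empty_iff]
  intro x _
  have := descCP'_insertMax_eq_or τ x.1 x.2
  omega

end ColoredPerm

theorem Fcount_eq_card (p n k : ℕ) [NeZero p] :
    Fcount p n k = #{σ : ColoredPerm p n | descCP' σ = k} := by
  rw [Fcount, Nat.card_eq_fintype_card, Fintype.card_subtype]

theorem Fcount_succ_eq_sum (p m k : ℕ) [NeZero p] :
    Fcount p (m + 1) k = ∑ τ : ColoredPerm p m,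
      #{x : Fin (m + 1) × ZMod p | descCP' (ColoredPerm.insertMax τ x.1 x.2) = k} := by
  rw [Fcount, ← Nat.card_congr (ColoredPerm.insertMaxEquiv.subtypeEquiv fun _ => Iff.rfl),
    Nat.card_eq_fintype_card, Fintype.card_subtype, card_filter, Fintype.sum_prod_type]
  simp only [card_filter]
  rfl

theorem Fcount_succ (p m : ℕ) [NeZero p] {k : ℕ} (hk : 1 ≤ k) :
    Fcount p (m + 1) k
      = (p * k + p - 1) * Fcount p m k + (p * (m + 1 - k) + 1) * Fcount p m (k - 1) := by
  simp only [Fcount_succ_eq_sum, ColoredPerm.card_descCP'_insertMax_eq _ hk, sum_add_distrib,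
    sum_ite, sum_const_zero, add_zero, sum_const, smul_eq_mul, Fcount_eq_card]
  ring

theorem Fcount_eq_Ecount (p : ℕ) [NeZero p] {n k : ℕ} (hk : k ≤ n) :
    Fcount p n k = Ecount p n (n - k) :=
  Nat.card_congr <| ColoredPerm.complEquiv.subtypeEquiv fun σ => by
    have := ColoredPerm.descCP_complEquiv_add_descCP' σ
    omega

theorem dash_descent_statistics_general (p : ℕ) [NeZero p] :
    (∀ n k : ℕ, 1 ≤ n → 1 ≤ k →
        Fcount p n k =
          (p * k + p - 1) * Fcount p (n - 1) k
            + (p * (n - k) + 1) * Fcount p (n - 1) (k - 1)) ∧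
      (p ≠ 1 → ∀ n k : ℕ, k ≤ n → Fcount p n k = Ecount p n (n - k)) := by
  refine ⟨fun n k hn hk => ?_, fun _ n k hk => Fcount_eq_Ecount p hk⟩
  obtain ⟨m, rfl⟩ : ∃ m, n = m + 1 := ⟨n - 1, by omega⟩
  exact Fcount_succ p m hk

/-- `F_p(n,k) = (pk+p-1)·F_p(n-1,k) + (p(n-k)+1)·F_p(n-1,k-1)`, and
`F_p(n,k) = E_p(n,n-k)` for `p ≠ 1`. -/
theorem dash_descent_statistics (p : ℕ) [NeZero p] (hp : 1 ≤ p) :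
    (∀ n k : ℕ, 1 ≤ n → 1 ≤ k →
        Fcount p n k =
          (p * k + p - 1) * Fcount p (n - 1) k
            + (p * (n - k) + 1) * Fcount p (n - 1) (k - 1)) ∧
      (p ≠ 1 → ∀ n k : ℕ, k ≤ n → Fcount p n k = Ecount p n (n - k)) :=
  dash_descent_statistics_general p
end

section
/- Let b ≥ 2, n ≥ 1, p ≥ 1 with b ≡ 1 (mod p), and let P(i,j) = b^{-n} Σ_{r≥0} (-1)^r binom(n+1,r) binom(n + B(i,j) - br, n) · 1[B(i,j) - br ≥ 0], where B(i,j) = (j + 1/p)·b - (i + 1/p), be the transition matrix of the (b,n,p)-carries process on states {0,...,n}. Then ũ(i) := i + 1/p - (n+1)/2 defines a right eigenvector of P with eigenvalue 1/b, i.e., Σ_j P(i,j)·ũ(j) = (1/b)·ũ(i) for all i. -/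
/-!
Put `Φ = 1 + X + ⋯ + X^(b-1)` and `a = i + (b - 1) - (b - 1)/p`. Since `(1 - X) Φ = 1 - X^b`,
the alternating binomial sum in `b^n P(i,j)` is the coefficient of `X^(jb + b - 1)` in
`X^a Φ^(n+1) = Φ · X^a Φ^n`, i.e. the number of digit tuples `x ∈ {0,…,b-1}^n` with
`⌊(a + x₁ + ⋯ + xₙ)/b⌋ = j`. So `Σ_j P(i,j) j` is the mean of `⌊(a + S)/b⌋` for a sum `S`
of `n` uniform digits. Averaging over one digit first, Hermite's identity
`Σ_{s<b} ⌊(m+s)/b⌋ = m` removes both that digit and the floor: the mean is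
`(a + (n-1)(b-1)/2)/b`. Since `b/p - (b-1)/p = 1/p`, this is the eigenvector equation.
-/

/-- `B(i,j) = (j + 1/p)·b - (i + 1/p) = jb - i + (b-1)/p`, an integer since
`b ≡ 1 mod p`. -/
def Bplus (b p i j : ℕ) : ℤ := (j : ℤ) * b - i + ((b - 1) / p : ℕ)

/-- Transition matrix of the `(b,n,p)`-carries process on `{0,...,n}`:
`P(i,j) = b^{-n} Σ_{r ≥ 0} (-1)^r binom(n+1,r) binom(n+B(i,j)-br, n)·1[B(i,j)-br ≥ 0]`
(terms with `r > n+1` vanish since `binom(n+1,r) = 0`). -/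
noncomputable def carriesP (b p n : ℕ) (i j : ℕ) : ℝ :=
  (b : ℝ) ^ (-(n : ℤ)) *
    ∑ r ∈ Finset.range (n + 2),
      (-1 : ℝ) ^ r * ((n + 1).choose r : ℝ) *
        (if 0 ≤ Bplus b p i j - b * r
          then (((n + (Bplus b p i j - b * r)).toNat.choose n : ℕ) : ℝ) else 0)

open Polynomial Finset

noncomputable def digitPoly (R : Type*) [Semiring R] (b : ℕ) : R[X] := ∑ s ∈ range b, X ^ s

theorem sum_range_mul_eq_sum_sum {M : Type*} [AddCommMonoid M] (F : ℕ → M) (J b : ℕ) :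
    ∑ k ∈ range (J * b), F k = ∑ j ∈ range J, ∑ s ∈ range b, F (j * b + s) := by
  induction J with
  | zero => simp
  | succ J ih => rw [add_mul, one_mul, sum_range_add, ih, sum_range_succ]

theorem sum_range_add_div {b : ℕ} (hb : 0 < b) (m : ℕ) :
    ∑ s ∈ range b, (m + s) / b = m := by
  induction m with
  | zero => exact sum_eq_zero fun s hs => Nat.div_eq_of_lt (by simpa using hs)
  | succ m ih =>
    have h := (sum_range_succ' (fun s => (m + s) / b) b).symm.trans (sum_range_succ _ b)
    simp only [ih, Nat.add_div_right m hb, add_zero, ← add_assoc] at h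
    simp only [add_right_comm m 1]
    omega

theorem natDegree_digitPoly_le (R : Type*) [Semiring R] (b : ℕ) :
    (digitPoly R b).natDegree ≤ b - 1 :=
  natDegree_sum_le_of_forall_le _ _ fun s hs =>
    (natDegree_X_pow_le s).trans (by rw [mem_range] at hs; omega)

theorem natDegree_X_pow_mul_digitPoly_pow_lt (R : Type*) [Semiring R] {a b n : ℕ} (hb : 0 < b)
    (ha : a < b + n) : ((X : R[X]) ^ a * digitPoly R b ^ n).natDegree < (n + 1) * b := by
  have hdeg : ((X : R[X]) ^ a * digitPoly R b ^ n).natDegree ≤ a + n * (b - 1) :=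
    natDegree_mul_le.trans <| add_le_add (natDegree_X_pow_le a) <|
      natDegree_pow_le.trans <| Nat.mul_le_mul_left n (natDegree_digitPoly_le R b)
  have hmul : n * (b - 1) + n = n * b := by rw [← Nat.mul_add_one, Nat.sub_add_cancel hb]
  rw [add_one_mul]
  omega

theorem eval_one_X_pow_mul_digitPoly_pow (R : Type*) [CommSemiring R] (a b n : ℕ) :
    ((X : R[X]) ^ a * digitPoly R b ^ n).eval 1 = (b : R) ^ n := by
  simp [digitPoly, eval_finsetSum]

theorem coeff_digitPoly_mul {R : Type*} [Semiring R] (b m : ℕ) (f : R[X]) :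
    (digitPoly R b * f).coeff (m + (b - 1)) = ∑ s ∈ range b, f.coeff (m + s) := by
  rw [digitPoly, sum_mul, finsetSum_coeff, ← sum_range_reflect]
  refine sum_congr rfl fun s hs => ?_
  rw [mem_range] at hs
  rw [coeff_X_pow_mul', if_pos (by omega)]
  congr 1
  omega

theorem coeff_X_pow_mul_digitPoly_pow {R : Type*} [CommRing R] (a b n k : ℕ) :
    ((X : R[X]) ^ a * digitPoly R b ^ (n + 1)).coeff k =
      ∑ r ∈ range (n + 2), (-1) ^ r * ((n + 1).choose r : R) *
        if a + b * r ≤ k then ((n + (k - a - b * r)).choose n : R) else 0 := by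
  set G : PowerSeries R := PowerSeries.mk fun m => ((n + m).choose n : R)
  have hG : G * (1 - PowerSeries.X) ^ (n + 1) = 1 :=
    PowerSeries.mk_add_choose_mul_one_sub_pow_eq_one R n
  have hΦ : (1 - PowerSeries.X) * ((digitPoly R b : R[X]) : PowerSeries R) =
      1 - PowerSeries.X ^ b := by
    rw [digitPoly, ← coeToPowerSeries.ringHom_apply, map_sum]
    simpa using mul_neg_geom_sum (PowerSeries.X : PowerSeries R) b
  have hseries : ((X ^ a * digitPoly R b ^ (n + 1) : R[X]) : PowerSeries R) =
      PowerSeries.X ^ a * (1 - PowerSeries.X ^ b) ^ (n + 1) * G := by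
    rw [← hΦ, mul_pow]
    push_cast
    linear_combination
      -(PowerSeries.X ^ a * ((digitPoly R b : R[X]) : PowerSeries R) ^ (n + 1)) * hG
  rw [← coeff_coe, hseries, sub_eq_neg_add, add_pow, mul_sum, sum_mul, map_sum]
  refine sum_congr rfl fun r _ => ?_
  rw [neg_pow, one_pow, mul_one, ← pow_mul,
    show (PowerSeries.X : PowerSeries R) ^ a * ((-1) ^ r * PowerSeries.X ^ (b * r) *
      ((n + 1).choose r : PowerSeries R)) * G =
      PowerSeries.C ((-1) ^ r * ((n + 1).choose r : R)) * (PowerSeries.X ^ (a + b * r) * G) by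
    simp only [map_mul, map_pow, map_neg, map_one, map_natCast, pow_add]; ring,
    PowerSeries.coeff_C_mul, PowerSeries.coeff_X_pow_mul', PowerSeries.coeff_mk, Nat.sub_sub]

theorem carriesP_eq_sum_coeff (b p n i j : ℕ) :
    carriesP b p n i j = (b : ℝ) ^ (-(n : ℤ)) * ∑ s ∈ range b,
      ((X : ℝ[X]) ^ (i + (b - 1) - (b - 1) / p) * digitPoly ℝ b ^ n).coeff (j * b + s) := by
  have hq : (b - 1) / p ≤ b - 1 := Nat.div_le_self _ _
  rw [carriesP, ← coeff_digitPoly_mul, mul_left_comm, ← pow_succ',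
    coeff_X_pow_mul_digitPoly_pow]
  congr 1
  refine sum_congr rfl fun r _ => ?_
  unfold Bplus
  congr 1
  by_cases hr : i + (b - 1) - (b - 1) / p + b * r ≤ j * b + (b - 1)
  · rw [if_pos hr, if_pos (by push_cast; omega)]
    congr 2
    omega
  · rw [if_neg hr, if_neg (by push_cast; omega)]

section coeffPairing

variable {R : Type*} [CommSemiring R]

noncomputable def coeffPairing (h : ℕ → R) : R[X] →ₗ[R] R :=
  lsum fun k => LinearMap.mulRight R (h k)

theorem coeffPairing_apply (h : ℕ → R) (f : R[X]) :
    coeffPairing h f = ∑ k ∈ f.support, f.coeff k * h k := by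
  simp [coeffPairing, Polynomial.sum_def]

theorem coeffPairing_monomial (h : ℕ → R) (k : ℕ) (c : R) :
    coeffPairing h (monomial k c) = c * h k := by
  simp [coeffPairing, sum_monomial_index]

theorem coeffPairing_X_pow (h : ℕ → R) (k : ℕ) : coeffPairing h (X ^ k) = h k := by
  rw [← monomial_one_right_eq_X_pow, coeffPairing_monomial, one_mul]

theorem coeffPairing_const (c : R) (f : R[X]) : coeffPairing (fun _ => c) f = c * f.eval 1 := by
  simp [coeffPairing, eval_eq_sum, Polynomial.sum_def, mul_sum, mul_comm]

theorem coeffPairing_eq_sum_range (h : ℕ → R) {f : R[X]} {N : ℕ} (hf : f.natDegree < N) :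
    coeffPairing h f = ∑ k ∈ range N, f.coeff k * h k := by
  simp only [coeffPairing, lsum_apply, LinearMap.mulRight_apply]
  exact sum_over_range' f (f := fun k c => c * h k) (fun _ => zero_mul _) N hf

theorem coeffPairing_add_fun (h h' : ℕ → R) (f : R[X]) :
    coeffPairing (fun k => h k + h' k) f = coeffPairing h f + coeffPairing h' f := by
  simp only [coeffPairing_apply, mul_add, sum_add_distrib]

theorem coeffPairing_mul_fun (c : R) (h : ℕ → R) (f : R[X]) :
    coeffPairing (fun k => c * h k) f = c * coeffPairing h f := by
  simp only [coeffPairing_apply, mul_sum]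
  exact sum_congr rfl fun _ _ => mul_left_comm _ _ _

theorem coeffPairing_sum_fun {ι : Type*} (s : Finset ι) (h : ι → ℕ → R) (f : R[X]) :
    coeffPairing (fun k => ∑ t ∈ s, h t k) f = ∑ t ∈ s, coeffPairing (h t) f := by
  simp only [coeffPairing_apply, mul_sum]
  exact sum_comm

theorem coeffPairing_X_pow_mul (h : ℕ → R) (s : ℕ) (f : R[X]) :
    coeffPairing h (X ^ s * f) = coeffPairing (fun k => h (k + s)) f := by
  induction f using Polynomial.induction_on' with
  | add f g hf hg => rw [mul_add, map_add, map_add, hf, hg]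
  | monomial k c => rw [X_pow_mul_monomial, coeffPairing_monomial, coeffPairing_monomial]

theorem coeffPairing_digitPoly_mul (h : ℕ → R) (b : ℕ) (f : R[X]) :
    coeffPairing h (digitPoly R b * f) =
      coeffPairing (fun k => ∑ s ∈ range b, h (k + s)) f := by
  simp only [digitPoly, sum_mul, map_sum, coeffPairing_X_pow_mul, coeffPairing_sum_fun]

theorem coeffPairing_div_digitPoly_mul {b : ℕ} (hb : 0 < b) (f : R[X]) :
    coeffPairing (fun k => ((k / b : ℕ) : R)) (digitPoly R b * f) =
      coeffPairing (fun k => (k : R)) f := by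
  rw [coeffPairing_digitPoly_mul]
  simp only [← Nat.cast_sum, sum_range_add_div hb]

theorem coeffPairing_natCast_digitPoly_mul (b : ℕ) (f : R[X]) :
    coeffPairing (fun k => (k : R)) (digitPoly R b * f) =
      b * coeffPairing (fun k => (k : R)) f + (∑ s ∈ range b, (s : R)) * f.eval 1 := by
  rw [coeffPairing_digitPoly_mul, ← coeffPairing_const, ← coeffPairing_mul_fun,
    ← coeffPairing_add_fun]
  simp only [Nat.cast_add, sum_add_distrib, sum_const, card_range, nsmul_eq_mul]

theorem sum_window_mul_eq_coeffPairing {b J : ℕ} (hb : 0 < b) (g : ℕ → R) {f : R[X]}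
    (hf : f.natDegree < J * b) :
    ∑ j ∈ range J, (∑ s ∈ range b, f.coeff (j * b + s)) * g j =
      coeffPairing (fun k => g (k / b)) f := by
  rw [coeffPairing_eq_sum_range _ hf, sum_range_mul_eq_sum_sum]
  refine sum_congr rfl fun j _ => ?_
  rw [sum_mul]
  refine sum_congr rfl fun s hs => ?_
  rw [add_comm, Nat.add_mul_div_right _ _ hb, Nat.div_eq_of_lt (mem_range.mp hs), zero_add]

end coeffPairing

theorem coeffPairing_natCast_X_pow_mul_digitPoly_pow {K : Type*} [Field K] [CharZero K]
    (a b n : ℕ) :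
    coeffPairing (fun k => (k : K)) ((X : K[X]) ^ a * digitPoly K b ^ n) =
      (b : K) ^ n * (a + n * (b - 1) / 2) := by
  have gauss : ∀ m : ℕ, (∑ s ∈ range m, (s : K)) = m * (m - 1) / 2 := by
    intro m
    induction m with
    | zero => simp
    | succ m ih => rw [sum_range_succ, ih]; push_cast; ring
  induction n with
  | zero => simp [coeffPairing_X_pow]
  | succ n ih =>
    rw [pow_succ', mul_left_comm, coeffPairing_natCast_digitPoly_mul, ih, gauss,
      eval_one_X_pow_mul_digitPoly_pow]
    push_cast
    ring

theorem carriesP_right_eigenvector_one_general (b p n : ℕ) (hb : 2 ≤ b) (hn : 1 ≤ n)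
    (hmod : b ≡ 1 [MOD p]) :
    ∀ i ≤ n,
      ∑ j ∈ Finset.range (n + 1),
          carriesP b p n i j * ((j : ℝ) + 1 / p - ((n : ℝ) + 1) / 2) =
        (1 / b) * ((i : ℝ) + 1 / p - ((n : ℝ) + 1) / 2) := by
  intro i hi
  obtain ⟨N, rfl⟩ : ∃ N, n = N + 1 := ⟨n - 1, by omega⟩
  obtain ⟨a, ha⟩ : ∃ a, i + (b - 1) - (b - 1) / p = a := ⟨_, rfl⟩
  have hb0 : 0 < b := by omega
  have hdeg := natDegree_X_pow_mul_digitPoly_pow_lt ℝ (n := N + 1) hb0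
    (by have := ha ▸ Nat.sub_le (i + (b - 1)) ((b - 1) / p); omega : a < b + (N + 1))
  have hmean : coeffPairing (fun k => ((k / b : ℕ) : ℝ))
      ((X : ℝ[X]) ^ a * digitPoly ℝ b ^ (N + 1)) = (b : ℝ) ^ N * (a + N * (b - 1) / 2) := by
    rw [pow_succ', mul_left_comm, coeffPairing_div_digitPoly_mul hb0,
      coeffPairing_natCast_X_pow_mul_digitPoly_pow]
  have hq : (((b - 1) / p : ℕ) : ℝ) = (b - 1) / p := by
    rw [Nat.cast_div_charZero ((Nat.modEq_iff_dvd' hb0).mp hmod.symm), Nat.cast_pred hb0]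
  have ha_cast : (a : ℝ) = i + (b - 1) - (b - 1) / p := by
    rw [← ha, Nat.cast_sub (le_add_left (Nat.div_le_self _ _)), Nat.cast_add,
      Nat.cast_pred hb0, hq]
  simp_rw [carriesP_eq_sum_coeff, ha, mul_assoc, ← mul_sum, add_sub_assoc]
  rw [sum_window_mul_eq_coeffPairing hb0 (fun j => (j : ℝ) + (1 / p - ((N + 1 : ℕ) + 1) / 2))
      hdeg, coeffPairing_add_fun, coeffPairing_const, hmean, eval_one_X_pow_mul_digitPoly_pow,
    ha_cast, zpow_neg, zpow_natCast]
  field_simp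
  push_cast
  ring

/-- `ũ(i) = i + 1/p - (n+1)/2` is a right eigenvector of the
`(b,n,p)`-carries transition matrix with eigenvalue `1/b`. -/
theorem carriesP_right_eigenvector_one (b p n : ℕ) (hb : 2 ≤ b) (hn : 1 ≤ n)
    (hp : 1 ≤ p) (hmod : b ≡ 1 [MOD p]) :
    ∀ i ≤ n,
      ∑ j ∈ Finset.range (n + 1),
          carriesP b p n i j * ((j : ℝ) + 1 / p - ((n : ℝ) + 1) / 2) =
        (1 / b) * ((i : ℝ) + 1 / p - ((n : ℝ) + 1) / 2) :=
  carriesP_right_eigenvector_one_general b p n hb hn hmod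
end
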